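/- arXiv:math/0208196 — 9 statements merged into one kernel-verified Lean document; each statement's English description precedes it below -/
import Mathlib

section
/- Let Φ : [0,∞)^n → [0,∞) be such that d_Φ is a metric on the product of every choice of n metric spaces. Then Φ satisfies (A): Φ(q) = 0 iff q = 0, and (B): for all q¹,q²,q³ ∈ [0,∞)^n with qʲ ≤ qᵏ + qˡ for every permutation {j,k,l} of {1,2,3}, Φ(qʲ) ≤ Φ(qᵏ) + Φ(qˡ). -/
/-!
Condition (A) comes from taking every factor to be `ℝ` and comparing a point `q` with `0`.
For (B), any three numbers satisfying the triangle inequalities are the side lengths of a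
(possibly degenerate) triangle in the plane; realising the `i`-th coordinates of `q¹, q², q³`
as such a triangle in the `i`-th factor `ℂ` turns (B) into the triangle inequality of `d_Φ`.
-/

lemma exists_mul_eq_sq_add_sq_sub_sq {a b c : ℝ} (ha : 0 ≤ a) (hb : 0 ≤ b) (hc : 0 ≤ c)
    (hab : a ≤ b + c) (hba : b ≤ a + c) (hca : c ≤ a + b) :
    ∃ u : ℝ, 2 * c * u = c ^ 2 + b ^ 2 - a ^ 2 ∧ u ^ 2 ≤ b ^ 2 := by
  rcases hc.eq_or_lt with rfl | hc
  · exact ⟨0, by nlinarith, by nlinarith⟩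
  · refine ⟨(c ^ 2 + b ^ 2 - a ^ 2) / (2 * c), by field_simp, ?_⟩
    rw [div_pow, div_le_iff₀ (by positivity)]
    -- Heron: the product below is `16 · area²`.
    have heron : 0 ≤ (b + c - a) * (a + c - b) * (a + b - c) * (a + b + c) := by
      have := sub_nonneg.2 hab; have := sub_nonneg.2 hba; have := sub_nonneg.2 hca
      positivity
    nlinarith

lemma exists_complex_dist_eq {a b c : ℝ} (ha : 0 ≤ a) (hb : 0 ≤ b) (hc : 0 ≤ c)
    (hab : a ≤ b + c) (hba : b ≤ a + c) (hca : c ≤ a + b) :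
    ∃ x y z : ℂ, dist y z = a ∧ dist x z = b ∧ dist x y = c := by
  obtain ⟨u, hcu, hub⟩ := exists_mul_eq_sq_add_sq_sub_sq ha hb hc hab hba hca
  have hv : √(b ^ 2 - u ^ 2) ^ 2 = b ^ 2 - u ^ 2 := Real.sq_sqrt (sub_nonneg.2 hub)
  refine ⟨0, c, ⟨u, √(b ^ 2 - u ^ 2)⟩, ?_, ?_, ?_⟩ <;>
    rw [Complex.dist_eq_re_im, Real.sqrt_eq_iff_eq_sq (by positivity) (by assumption)] <;>
    simp only [Complex.zero_re, Complex.zero_im, Complex.ofReal_re, Complex.ofReal_im] <;>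
    nlinarith

section

variable {ι : Type*} (Φ : (ι → ℝ) → ℝ)

lemma map_eq_zero_iff_of_real
    (h : ∀ x y : ι → ℝ, Φ (fun i => dist (x i) (y i)) = 0 ↔ x = y)
    {q : ι → ℝ} (hq : 0 ≤ q) : Φ q = 0 ↔ q = 0 := by
  have hdist : (fun i => dist (q i) ((0 : ι → ℝ) i)) = q := by
    funext i
    simp [abs_of_nonneg (hq i)]
  simpa only [hdist] using h q 0

lemma map_le_add_of_complex
    (hsymm : ∀ x y : ι → ℂ, Φ (fun i => dist (x i) (y i)) = Φ (fun i => dist (y i) (x i)))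
    (htri : ∀ x y z : ι → ℂ, Φ (fun i => dist (x i) (z i)) ≤
      Φ (fun i => dist (x i) (y i)) + Φ (fun i => dist (y i) (z i)))
    {q₁ q₂ q₃ : ι → ℝ} (hq₁ : 0 ≤ q₁) (hq₂ : 0 ≤ q₂) (hq₃ : 0 ≤ q₃)
    (h₁ : q₁ ≤ q₂ + q₃) (h₂ : q₂ ≤ q₁ + q₃) (h₃ : q₃ ≤ q₁ + q₂) :
    Φ q₁ ≤ Φ q₂ + Φ q₃ := by
  choose x y z hyz hxz hxy using fun i =>
    exists_complex_dist_eq (hq₁ i) (hq₂ i) (hq₃ i) (h₁ i) (h₂ i) (h₃ i)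
  have h := htri y x z
  rw [hsymm y x, funext hyz, funext hxz, funext hxy] at h
  linarith

end

theorem stmt_1_general {n : ℕ} (Φ : (Fin n → ℝ) → ℝ)
    (hmetric : ∀ (X : Fin n → Type) (_ : ∀ i, MetricSpace (X i)),
      (∀ x y : ∀ i, X i, (Φ (fun i => dist (x i) (y i)) = 0 ↔ x = y)) ∧
      (∀ x y : ∀ i, X i, Φ (fun i => dist (x i) (y i)) = Φ (fun i => dist (y i) (x i))) ∧
      (∀ x y z : ∀ i, X i, Φ (fun i => dist (x i) (z i)) ≤
        Φ (fun i => dist (x i) (y i)) + Φ (fun i => dist (y i) (z i)))) :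
    (∀ q : Fin n → ℝ, 0 ≤ q → (Φ q = 0 ↔ q = 0)) ∧
    (∀ q1 q2 q3 : Fin n → ℝ, 0 ≤ q1 → 0 ≤ q2 → 0 ≤ q3 →
      q1 ≤ q2 + q3 → q2 ≤ q1 + q3 → q3 ≤ q1 + q2 →
      Φ q1 ≤ Φ q2 + Φ q3) := by
  obtain ⟨hzero, -, -⟩ := hmetric (fun _ => ℝ) fun _ => inferInstance
  obtain ⟨-, hsymm, htri⟩ := hmetric (fun _ => ℂ) fun _ => inferInstance
  exact ⟨fun _ => map_eq_zero_iff_of_real Φ hzero,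
    fun _ _ _ => map_le_add_of_complex Φ hsymm htri⟩

/-- If `d_Φ` is a metric on the product of every choice of `n` metric
spaces, then `Φ` satisfies conditions (A) and (B). -/
theorem stmt_1 {n : ℕ} (Φ : (Fin n → ℝ) → ℝ)
    (hpos : ∀ q : Fin n → ℝ, 0 ≤ q → 0 ≤ Φ q)
    (hmetric : ∀ (X : Fin n → Type) (_ : ∀ i, MetricSpace (X i)),
      (∀ x y : ∀ i, X i, (Φ (fun i => dist (x i) (y i)) = 0 ↔ x = y)) ∧
      (∀ x y : ∀ i, X i, Φ (fun i => dist (x i) (y i)) = Φ (fun i => dist (y i) (x i))) ∧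
      (∀ x y z : ∀ i, X i, Φ (fun i => dist (x i) (z i)) ≤
        Φ (fun i => dist (x i) (y i)) + Φ (fun i => dist (y i) (z i)))) :
    (∀ q : Fin n → ℝ, 0 ≤ q → (Φ q = 0 ↔ q = 0)) ∧
    (∀ q1 q2 q3 : Fin n → ℝ, 0 ≤ q1 → 0 ≤ q2 → 0 ≤ q3 →
      q1 ≤ q2 + q3 → q2 ≤ q1 + q3 → q3 ≤ q1 + q2 →
      Φ q1 ≤ Φ q2 + Φ q3) :=
  stmt_1_general Φ hmetric
end

section
/- Let Ψ : ℝ^n → [0,∞) be a norm with Ψ(x₁,...,xₙ) = Ψ(|x₁|,...,|xₙ|) for all x (i.e. Ψ is invariant under sign changes of coordinates). Then Ψ is monotone on [0,∞)^n: if 0 ≤ q ≤ p componentwise, then Ψ(q) ≤ Ψ(p). -/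
/-!
Fix all coordinates of `x` but the `i`-th. Since `Ψ` is a seminorm, `s ↦ Ψ (update x i s)` is a
convex function on `ℝ`, and sign invariance makes it even. A convex even function is monotone on
`[0, ∞)`, because `s ∈ [-t, t]` gives `f s ≤ max (f (-t)) (f t) = f t`. Lowering the coordinates of
`p` to those of `q` one at a time therefore never increases `Ψ`.
-/

open Function Set

theorem ConvexOn.monotoneOn_of_even {f : ℝ → ℝ} (hf : ConvexOn ℝ univ f) (heven : f.Even) :
    MonotoneOn f (Ici 0) := by
  intro s hs t _ hst
  have hmem : s ∈ segment ℝ (-t) t := by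
    rw [segment_eq_Icc (by linarith [mem_Ici.1 hs])]
    exact ⟨by linarith [mem_Ici.1 hs], hst⟩
  simpa [heven t] using hf.le_on_segment trivial trivial hmem

namespace Pi

variable {ι : Type*} [DecidableEq ι]

theorem update_eq_update_zero_add_smul_single {R : Type*} [Semiring R] (x : ι → R) (i : ι)
    (s : R) : update x i s = update x i 0 + s • Pi.single i 1 := by
  ext j
  rcases eq_or_ne j i with rfl | hj <;> simp [*]

theorem abs_update {α : Type*} [Lattice α] [AddGroup α] (x : ι → α) (i : ι) (s : α) :
    |update x i s| = update |x| i |s| := by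
  ext j
  rcases eq_or_ne j i with rfl | hj <;> simp [*]

end Pi

namespace Seminorm

variable {ι : Type*} [DecidableEq ι]

theorem convexOn_update (N : Seminorm ℝ (ι → ℝ)) (x : ι → ℝ) (i : ι) :
    ConvexOn ℝ univ fun s => N (update x i s) := by
  rw [show (fun s => N (update x i s)) = fun s => N (update x i 0 + s • Pi.single i 1) from
    funext fun s => congrArg N (Pi.update_eq_update_zero_add_smul_single x i s)]
  exact (N.convexOn.translate_right (update x i 0)).comp_linearMap
    (LinearMap.toSpanSingleton ℝ _ (Pi.single i 1))

theorem monotoneOn_update_of_abs (N : Seminorm ℝ (ι → ℝ)) (habs : ∀ x, N x = N |x|)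
    (x : ι → ℝ) (i : ι) : MonotoneOn (fun s => N (update x i s)) (Ici 0) :=
  (N.convexOn_update x i).monotoneOn_of_even fun s => by
    simp only [habs (update x i _), Pi.abs_update, abs_neg]

theorem monotoneOn_of_abs [Fintype ι] (N : Seminorm ℝ (ι → ℝ)) (habs : ∀ x, N x = N |x|) :
    MonotoneOn N (Ici 0) := by
  intro q hq p _ hqp
  suffices ∀ s : Finset ι, N (s.piecewise q p) ≤ N p by simpa using this Finset.univ
  intro s
  induction s using Finset.induction_on with
  | empty => simp
  | insert i s hi ih =>
    rw [Finset.piecewise_insert]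
    refine le_trans ?_ ih
    have hpi : s.piecewise q p i = p i := Finset.piecewise_eq_of_notMem _ _ _ hi
    calc N (update (s.piecewise q p) i (q i))
        ≤ N (update (s.piecewise q p) i (s.piecewise q p i)) :=
          N.monotoneOn_update_of_abs habs _ i (hq i) (hpi ▸ (hq i).trans (hqp i)) (hpi ▸ hqp i)
      _ = N (s.piecewise q p) := by rw [update_eq_self]

end Seminorm

theorem stmt_5_general {n : ℕ} (Ψ : (Fin n → ℝ) → ℝ)
    (hadd : ∀ x y : Fin n → ℝ, Ψ (x + y) ≤ Ψ x + Ψ y)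
    (hsmul : ∀ (c : ℝ) (x : Fin n → ℝ), Ψ (c • x) = |c| * Ψ x)
    (habs : ∀ x : Fin n → ℝ, Ψ x = Ψ (fun i => |x i|)) :
    ∀ p q : Fin n → ℝ, 0 ≤ q → q ≤ p → Ψ q ≤ Ψ p := by
  intro p q hq hqp
  let N : Seminorm ℝ (Fin n → ℝ) := .of Ψ hadd hsmul
  exact N.monotoneOn_of_abs habs hq (hq.trans hqp) hqp

/-- A norm `Ψ` on `ℝⁿ` which is invariant under sign changes of the
coordinates is monotone on the positive quadrant. -/
theorem stmt_5 {n : ℕ} (Ψ : (Fin n → ℝ) → ℝ)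
    (hdef : ∀ x : Fin n → ℝ, Ψ x = 0 ↔ x = 0)
    (hadd : ∀ x y : Fin n → ℝ, Ψ (x + y) ≤ Ψ x + Ψ y)
    (hsmul : ∀ (c : ℝ) (x : Fin n → ℝ), Ψ (c • x) = |c| * Ψ x)
    (habs : ∀ x : Fin n → ℝ, Ψ x = Ψ (fun i => |x i|)) :
    ∀ p q : Fin n → ℝ, 0 ≤ q → q ≤ p → Ψ q ≤ Ψ p :=
  stmt_5_general Ψ hadd hsmul habs
end

section
/- Let Φ : [0,∞)^n → [0,∞) satisfy conditions (1)–(4) (positivity, monotonicity, subadditivity, positive homogeneity), and let Ψ(x) = Φ(|x₁|,...,|xₙ|). Then Ψ is induced by an inner product on ℝ^n if and only if Φ²(λ₁e₁ + ... + λₙeₙ) = Φ²(λ₁e₁) + ... + Φ²(λₙeₙ) for all λᵢ > 0. In this case {e₁,...,eₙ} is an orthogonal system for that inner product. -/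
open Finset Filter Topology

/-!
If `Ψ²` is a quadratic form for which the `eᵢ` are orthogonal, then `Ψ²(x) = ∑ dᵢ xᵢ²` with
`dᵢ = Ψ²(eᵢ)`, and evaluating this at `λ` and at `λᵢ eᵢ` gives the Pythagorean identity.
Conversely, the identity together with homogeneity says that `Φ²` agrees with the diagonal form
`∑ Φ²(eᵢ) qᵢ²` on the open orthant. Monotonicity and subadditivity squeeze `Φ(q + ε𝟙)` between
`Φ(q)` and `Φ(q) + ε Φ(𝟙)`, so the agreement extends to the closed orthant; hence `Ψ²` is that
diagonal form, which is positive definite because `Φ(eᵢ) ≠ 0`.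
-/

theorem LinearMap.apply_eq_sum_of_orthogonal {R ι : Type*} [CommRing R] [Fintype ι]
    [DecidableEq ι] (L : (ι → R) →ₗ[R] (ι → R) →ₗ[R] R)
    (horth : ∀ i j, i ≠ j → L (Pi.single i 1) (Pi.single j 1) = 0) (x y : ι → R) :
    L x y = ∑ i, x i * y i * L (Pi.single i 1) (Pi.single i 1) := by
  have hdiag : LinearMap.toMatrix₂' R L =
      Matrix.diagonal fun i => L (Pi.single i 1) (Pi.single i 1) := by
    ext i j
    rcases eq_or_ne i j with rfl | hij
    · simp
    · simp [horth i j hij, hij]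
  conv_lhs => rw [← Matrix.toLinearMap₂'_toMatrix' (R := R) L, hdiag, Matrix.toLinearMap₂'_apply']
  simp only [dotProduct, Matrix.mulVec_diagonal]
  exact sum_congr rfl fun i _ => by ring

section Orthant

variable {ι : Type*} {Φ : (ι → ℝ) → ℝ}

theorem sq_eq_sum_sq_single_of_sq_eq_sum [Fintype ι] [DecidableEq ι] {d : ι → ℝ}
    (h : ∀ q, 0 ≤ q → Φ q ^ 2 = ∑ i, q i ^ 2 * d i) {l : ι → ℝ} (hl : 0 ≤ l) :
    Φ l ^ 2 = ∑ i, Φ (Pi.single i (l i)) ^ 2 := by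
  rw [h l hl]
  refine sum_congr rfl fun i _ => ?_
  rw [h _ (Pi.single_nonneg.2 (hl i))]
  simp [Pi.single_apply]

theorem sq_apply_single [DecidableEq ι]
    (hhom : ∀ (t : ℝ) q, 0 ≤ t → 0 ≤ q → Φ (t • q) = t * Φ q)
    (i : ι) {t : ℝ} (ht : 0 ≤ t) :
    Φ (Pi.single i t) ^ 2 = t ^ 2 * Φ (Pi.single i 1) ^ 2 := by
  have hsingle : Pi.single i t = t • Pi.single i (1 : ℝ) := by
    rw [← Pi.single_smul', smul_eq_mul, mul_one]
  rw [hsingle, hhom t _ ht (Pi.single_nonneg.2 zero_le_one), mul_pow]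

theorem tendsto_apply_add_smul_one (hmono : ∀ p q, 0 ≤ q → q ≤ p → Φ q ≤ Φ p)
    (hsub : ∀ p q, 0 ≤ p → 0 ≤ q → Φ (p + q) ≤ Φ p + Φ q)
    (hhom : ∀ (t : ℝ) q, 0 ≤ t → 0 ≤ q → Φ (t • q) = t * Φ q) {q : ι → ℝ} (hq : 0 ≤ q) :
    Tendsto (fun ε : ℝ => Φ (q + ε • 1)) (𝓝[>] 0) (𝓝 (Φ q)) := by
  have hbound : Tendsto (fun ε : ℝ => Φ q + ε * Φ 1) (𝓝[>] 0) (𝓝 (Φ q)) := by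
    have : Continuous fun ε : ℝ => Φ q + ε * Φ 1 := by fun_prop
    simpa using (this.tendsto 0).mono_left nhdsWithin_le_nhds
  refine tendsto_of_tendsto_of_tendsto_of_le_of_le' tendsto_const_nhds hbound ?_ ?_
  all_goals filter_upwards [self_mem_nhdsWithin] with ε (hε : 0 < ε)
  · exact hmono _ _ hq (le_add_of_nonneg_right (smul_nonneg hε.le zero_le_one))
  · rw [← hhom ε 1 hε.le zero_le_one]
    exact hsub _ _ hq (smul_nonneg hε.le zero_le_one)

theorem sq_eq_sum_of_sq_eq_sum_sq_single [Fintype ι] [DecidableEq ι]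
    (hmono : ∀ p q, 0 ≤ q → q ≤ p → Φ q ≤ Φ p)
    (hsub : ∀ p q, 0 ≤ p → 0 ≤ q → Φ (p + q) ≤ Φ p + Φ q)
    (hhom : ∀ (t : ℝ) q, 0 ≤ t → 0 ≤ q → Φ (t • q) = t * Φ q)
    (h : ∀ l : ι → ℝ, (∀ i, 0 < l i) → Φ l ^ 2 = ∑ i, Φ (Pi.single i (l i)) ^ 2)
    {q : ι → ℝ} (hq : 0 ≤ q) :
    Φ q ^ 2 = ∑ i, q i ^ 2 * Φ (Pi.single i 1) ^ 2 := by
  set F := fun l : ι → ℝ => ∑ i, l i ^ 2 * Φ (Pi.single i 1) ^ 2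
  have hF : Tendsto (fun ε : ℝ => F (q + ε • 1)) (𝓝[>] 0) (𝓝 (F q)) := by
    have : Continuous fun ε : ℝ => F (q + ε • 1) := by fun_prop
    simpa using (this.tendsto 0).mono_left nhdsWithin_le_nhds
  refine tendsto_nhds_unique ((tendsto_apply_add_smul_one hmono hsub hhom hq).pow 2)
    (hF.congr' ?_)
  filter_upwards [self_mem_nhdsWithin] with ε (hε : 0 < ε)
  have hpos : ∀ i, 0 < (q + ε • 1) i := fun i => by
    simpa using add_pos_of_nonneg_of_pos (hq i) hε
  rw [h _ hpos]
  exact sum_congr rfl fun i _ => (sq_apply_single hhom i (hpos i).le).symm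

end Orthant

theorem stmt_6_general {n : ℕ} (Φ : (Fin n → ℝ) → ℝ)
    (hdef : ∀ q : Fin n → ℝ, 0 ≤ q → (Φ q = 0 ↔ q = 0))
    (hmono : ∀ p q : Fin n → ℝ, 0 ≤ q → q ≤ p → Φ q ≤ Φ p)
    (hsub : ∀ p q : Fin n → ℝ, 0 ≤ p → 0 ≤ q → Φ (p + q) ≤ Φ p + Φ q)
    (hhom : ∀ (l : ℝ) (q : Fin n → ℝ), 0 ≤ l → 0 ≤ q → Φ (l • q) = l * Φ q) :
    (∃ B : (Fin n → ℝ) → (Fin n → ℝ) → ℝ,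
        (∀ x y, B x y = B y x) ∧
        (∀ x y z, B (x + y) z = B x z + B y z) ∧
        (∀ (c : ℝ) x y, B (c • x) y = c * B x y) ∧
        (∀ x, x ≠ 0 → 0 < B x x) ∧
        (∀ x : Fin n → ℝ, Φ (fun i => |x i|) ^ 2 = B x x) ∧
        (∀ i j : Fin n, i ≠ j → B (Pi.single i 1) (Pi.single j 1) = 0))
    ↔
    (∀ l : Fin n → ℝ, (∀ i, 0 < l i) →
        Φ l ^ 2 = ∑ i, Φ (Pi.single i (l i)) ^ 2) := by
  constructor
  · rintro ⟨B, hsymm, hadd, hsmul, -, hnorm, horth⟩ l hl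
    let L : (Fin n → ℝ) →ₗ[ℝ] (Fin n → ℝ) →ₗ[ℝ] ℝ := LinearMap.mk₂ ℝ B hadd hsmul
      (fun x y z => by rw [hsymm, hadd, hsymm y, hsymm z])
      (fun c x y => by rw [hsymm, hsmul, hsymm, smul_eq_mul])
    refine sq_eq_sum_sq_single_of_sq_eq_sum (d := fun i => B (Pi.single i 1) (Pi.single i 1))
      (fun q hq => ?_) fun i => (hl i).le
    have habs : (fun i => |q i|) = q := funext fun i => abs_of_nonneg (hq i)
    rw [← habs, hnorm, habs]
    simp only [sq]
    exact L.apply_eq_sum_of_orthogonal horth q q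
  · intro h
    set c : Fin n → ℝ := fun i => Φ (Pi.single i 1) ^ 2
    have hc : ∀ i, 0 < c i := fun i => sq_pos_of_ne_zero fun h0 =>
      one_ne_zero (Pi.single_eq_zero_iff.1 ((hdef _ (Pi.single_nonneg.2 zero_le_one)).1 h0))
    refine ⟨fun x y => ∑ i, x i * y i * c i, fun x y => ?_, fun x y z => ?_, fun a x y => ?_,
      fun x hx => ?_, fun x => ?_, fun i j hij => ?_⟩
    · simp only [mul_comm (x _)]
    · simp only [Pi.add_apply, add_mul, sum_add_distrib]
    · simp only [Pi.smul_apply, smul_eq_mul, mul_sum, mul_assoc]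
    · obtain ⟨i, hi⟩ := Function.ne_iff.mp hx
      exact sum_pos' (fun j _ => mul_nonneg (mul_self_nonneg _) (hc j).le)
        ⟨i, mem_univ i, mul_pos (mul_self_pos.2 hi) (hc i)⟩
    · simp only [sq_eq_sum_of_sq_eq_sum_sq_single hmono hsub hhom h fun i => abs_nonneg (x i),
        sq, abs_mul_abs_self, c]
    · simp [Pi.single_apply, hij.symm]

/-- For `Φ` satisfying (1)-(4), the norm `Ψ(x) = Φ(|x₁|,...,|xₙ|)`
is induced by an inner product on `ℝⁿ` (for which the standard basis is an
orthogonal system) iff `Φ² (Σ λᵢ eᵢ) = Σ Φ²(λᵢ eᵢ)` for all `λᵢ > 0`. -/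
theorem stmt_6 {n : ℕ} (Φ : (Fin n → ℝ) → ℝ)
    (hpos : ∀ q : Fin n → ℝ, 0 ≤ q → 0 ≤ Φ q)
    (hdef : ∀ q : Fin n → ℝ, 0 ≤ q → (Φ q = 0 ↔ q = 0))
    (hmono : ∀ p q : Fin n → ℝ, 0 ≤ q → q ≤ p → Φ q ≤ Φ p)
    (hsub : ∀ p q : Fin n → ℝ, 0 ≤ p → 0 ≤ q → Φ (p + q) ≤ Φ p + Φ q)
    (hhom : ∀ (l : ℝ) (q : Fin n → ℝ), 0 ≤ l → 0 ≤ q → Φ (l • q) = l * Φ q) :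
    (∃ B : (Fin n → ℝ) → (Fin n → ℝ) → ℝ,
        (∀ x y, B x y = B y x) ∧
        (∀ x y z, B (x + y) z = B x z + B y z) ∧
        (∀ (c : ℝ) x y, B (c • x) y = c * B x y) ∧
        (∀ x, x ≠ 0 → 0 < B x x) ∧
        (∀ x : Fin n → ℝ, Φ (fun i => |x i|) ^ 2 = B x x) ∧
        (∀ i j : Fin n, i ≠ j → B (Pi.single i 1) (Pi.single j 1) = 0))
    ↔
    (∀ l : Fin n → ℝ, (∀ i, 0 < l i) →
        Φ l ^ 2 = ∑ i, Φ (Pi.single i (l i)) ^ 2) :=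
  stmt_6_general Φ hdef hmono hsub hhom
end

section
/- Let Φ : [0,∞)^n → [0,∞) satisfy conditions (1)–(4) (in particular Φ is continuous, monotone, subadditive, positively homogeneous). Let (Xᵢ,dᵢ) be metric spaces and cᵢ : [0,1] → Xᵢ continuous curves parameterized proportionally to arclength with lengths lᵢ. Then the length of the product curve c = (c₁,...,cₙ) : [0,1] → (X₁ × ... × Xₙ, d_Φ) equals Φ(l₁,...,lₙ). -/
/-! Write `q_j = (dᵢ(cᵢ(t_{j-1}), cᵢ(t_j)))ᵢ` for the increments along a partition; the Lipschitz
bound gives `0 ≤ q_j ≤ (t_j - t_{j-1}) l`. Monotonicity and homogeneity of `Φ` then bound each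
term `Φ(q_j)` by `(t_j - t_{j-1}) Φ(l)`, and these sum to `Φ(l)`. For the lower bound, take a
common refinement of partitions on which every component sum is within `δ` of `lᵢ` (refining
only increases sums, by the triangle inequality). By subadditivity and monotonicity,
`Φ((t_j - t_{j-1}) l) ≤ Φ(q_j) + |(t_j - t_{j-1}) l - q_j|₁ Φ(1, …, 1)`, and summing over `j` the
total loss is at most `n δ Φ(1, …, 1)`. -/

/-- The set of partition sums of a curve `c : [0,1] → X` with respect to a
distance function `d`; its supremum is the length of the curve. -/
def partitionSums {X : Type*} (d : X → X → ℝ) (c : ℝ → X) : Set ℝ :=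
  { s | ∃ (k : ℕ) (t : Fin (k + 1) → ℝ), Monotone t ∧ t 0 = 0 ∧ t (Fin.last k) = 1 ∧
      s = ∑ j : Fin k, d (c (t (Fin.castSucc j))) (c (t j.succ)) }

open Finset

theorem le_of_forall_pos_le_add_mul {a b C : ℝ} (hC : 0 ≤ C) (h : ∀ δ > 0, a ≤ b + C * δ) :
    a ≤ b := by
  refine le_of_forall_pos_le_add fun ε hε => (h (ε / (C + 1)) (by positivity)).trans ?_
  gcongr
  rw [mul_div_assoc', div_le_iff₀ (by positivity)]
  nlinarith

theorem Fin.sum_succ_sub_castSucc {G : Type*} [AddCommGroup G] {k : ℕ} (f : Fin (k + 1) → G) :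
    ∑ j : Fin k, (f j.succ - f j.castSucc) = f (Fin.last k) - f 0 := by
  induction k with
  | zero => simp
  | succ k ih =>
    have h := ih fun j => f j.succ
    simp only [Fin.succ_castSucc] at h
    rw [Fin.sum_univ_succ, h, Fin.succ_last, Fin.castSucc_zero]
    abel

def chainSum {α : Type*} (e : α → α → ℝ) : α → List α → ℝ
  | _, [] => 0
  | a, b :: r => e a b + chainSum e b r

section ChainSum

variable {α : Type*} {e : α → α → ℝ}

theorem chainSum_le_add_chainSum (he : ∀ x y, 0 ≤ e x y)
    (htri : ∀ x y z, e x z ≤ e x y + e y z) (a b : α) (r : List α) :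
    chainSum e a r ≤ e a b + chainSum e b r := by
  cases r with
  | nil => simpa [chainSum] using he a b
  | cons c r =>
    simp only [chainSum, ← add_assoc]
    gcongr
    exact htri a b c

theorem chainSum_mono (he : ∀ x y, 0 ≤ e x y) (htri : ∀ x y z, e x z ≤ e x y + e y z)
    {r s : List α} (h : r.Sublist s) (a : α) : chainSum e a r ≤ chainSum e a s := by
  induction h generalizing a with
  | slnil => exact le_rfl
  | cons b _ ih => exact (ih a).trans (chainSum_le_add_chainSum he htri a b _)
  | cons_cons b _ ih => exact add_le_add_right (ih b) _

end ChainSum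

theorem Fin.sum_castSucc_succ_eq_chainSum {α : Type*} (e : α → α → ℝ) {k : ℕ}
    (f : Fin (k + 1) → α) :
    ∑ j : Fin k, e (f j.castSucc) (f j.succ) = chainSum e (f 0) (List.ofFn fun j => f j.succ) := by
  induction k with
  | zero => simp [chainSum]
  | succ k ih =>
    rw [Fin.sum_univ_succ, List.ofFn_succ, chainSum]
    exact congrArg₂ (· + ·) rfl (ih fun j => f j.succ)

structure UnitIntervalPartition where
  k : ℕ
  t : Fin (k + 1) → ℝ
  monotone : Monotone t
  t_zero : t 0 = 0
  t_last : t (Fin.last k) = 1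

namespace UnitIntervalPartition

variable (P : UnitIntervalPartition)

def sum (e : ℝ → ℝ → ℝ) : ℝ := ∑ j : Fin P.k, e (P.t j.castSucc) (P.t j.succ)

def step (j : Fin P.k) : ℝ := P.t j.succ - P.t j.castSucc

theorem t_mem_Icc (j : Fin (P.k + 1)) : P.t j ∈ Set.Icc (0 : ℝ) 1 :=
  ⟨P.t_zero ▸ P.monotone (Fin.zero_le j), P.t_last ▸ P.monotone (Fin.le_last j)⟩

theorem step_nonneg (j : Fin P.k) : 0 ≤ P.step j :=
  sub_nonneg.2 (P.monotone (Fin.castSucc_le_succ j))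

theorem sum_step : ∑ j, P.step j = 1 :=
  (Fin.sum_succ_sub_castSucc P.t).trans (by rw [P.t_last, P.t_zero, sub_zero])

theorem dist_le_step_mul {X : Type*} [PseudoMetricSpace X] {f : ℝ → X} {L : ℝ}
    (hf : ∀ s ∈ Set.Icc (0 : ℝ) 1, ∀ t ∈ Set.Icc (0 : ℝ) 1, dist (f s) (f t) ≤ L * |s - t|)
    (j : Fin P.k) : dist (f (P.t j.castSucc)) (f (P.t j.succ)) ≤ P.step j * L := by
  have h := hf _ (P.t_mem_Icc j.castSucc) _ (P.t_mem_Icc j.succ)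
  rw [abs_sub_comm] at h
  change _ ≤ L * |P.step j| at h
  rwa [abs_of_nonneg (P.step_nonneg j), mul_comm] at h

def innerPoints : List ℝ := List.ofFn fun j => P.t j.succ

theorem sum_eq_chainSum (e : ℝ → ℝ → ℝ) : P.sum e = chainSum e 0 P.innerPoints := by
  rw [sum, Fin.sum_castSucc_succ_eq_chainSum, t_zero, innerPoints]

theorem pairwise_innerPoints : P.innerPoints.Pairwise (· ≤ ·) :=
  List.pairwise_ofFn.2 fun _ _ h => P.monotone (Fin.succ_le_succ_iff.2 h.le)

theorem mem_Icc_of_mem_innerPoints {x : ℝ} (hx : x ∈ P.innerPoints) : x ∈ Set.Icc (0 : ℝ) 1 := by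
  obtain ⟨j, rfl⟩ := List.mem_ofFn.1 hx
  exact P.t_mem_Icc _

def ofList (r : List ℝ) (hr : r.Pairwise (· ≤ ·)) (hr01 : ∀ x ∈ r, x ∈ Set.Icc (0 : ℝ) 1) :
    UnitIntervalPartition where
  k := (r ++ [1]).length
  t := (0 :: (r ++ [1])).get
  monotone _ _ hab := by
    refine List.Pairwise.rel_get_of_le ?_ hab
    simp only [List.pairwise_cons, List.pairwise_append, List.mem_append, List.mem_singleton]
    grind
  t_zero := rfl
  t_last := by simp

theorem ofList_sum {r : List ℝ} (hr : r.Pairwise (· ≤ ·)) (hr01 : ∀ x ∈ r, x ∈ Set.Icc (0 : ℝ) 1)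
    (e : ℝ → ℝ → ℝ) : (ofList r hr hr01).sum e = chainSum e 0 (r ++ [1]) := by
  rw [sum, Fin.sum_castSucc_succ_eq_chainSum]
  exact congrArg _ (List.ofFn_get _)

theorem exists_refinement (Ps : List UnitIntervalPartition) :
    ∃ Q : UnitIntervalPartition, ∀ P ∈ Ps, ∀ e : ℝ → ℝ → ℝ, (∀ x y, 0 ≤ e x y) →
      (∀ x y z, e x z ≤ e x y + e y z) → P.sum e ≤ Q.sum e := by
  set m := (Ps.map innerPoints).flatten.insertionSort (· ≤ ·)
  have hperm : m.Perm (Ps.map innerPoints).flatten := List.perm_insertionSort _ _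
  have hsorted : m.Pairwise (· ≤ ·) := List.pairwise_insertionSort _ _
  have hm01 : ∀ x ∈ m, x ∈ Set.Icc (0 : ℝ) 1 := by
    intro x hx
    obtain ⟨_, hP, hxP⟩ := List.mem_flatten.1 (hperm.mem_iff.1 hx)
    obtain ⟨P, -, rfl⟩ := List.mem_map.1 hP
    exact P.mem_Icc_of_mem_innerPoints hxP
  refine ⟨ofList m hsorted hm01, fun P hP e he htri => ?_⟩
  have hsub : P.innerPoints.Sublist m := by
    refine List.sublist_of_subperm_of_pairwise ?_ P.pairwise_innerPoints hsorted
    exact (List.sublist_flatten_of_mem (List.mem_map_of_mem hP)).subperm.trans hperm.symm.subperm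
  calc P.sum e = chainSum e 0 P.innerPoints := P.sum_eq_chainSum e
    _ ≤ chainSum e 0 (m ++ [1]) :=
      chainSum_mono he htri (hsub.trans (List.sublist_append_left _ _)) 0
    _ = _ := (ofList_sum hsorted hm01 e).symm

end UnitIntervalPartition

theorem mem_partitionSums_iff {X : Type*} {d : X → X → ℝ} {c : ℝ → X} {s : ℝ} :
    s ∈ partitionSums d c ↔ ∃ P : UnitIntervalPartition, P.sum (fun x y => d (c x) (c y)) = s :=
  ⟨fun ⟨k, t, hm, h0, h1, hs⟩ => ⟨⟨k, t, hm, h0, h1⟩, hs.symm⟩,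
    fun ⟨P, hs⟩ => ⟨P.k, P.t, P.monotone, P.t_zero, P.t_last, hs.symm⟩⟩

theorem exists_lt_sum_of_isLUB {X : Type*} {d : X → X → ℝ} {c : ℝ → X} {L a : ℝ}
    (hL : IsLUB (partitionSums d c) L) (ha : a < L) :
    ∃ P : UnitIntervalPartition, a < P.sum fun x y => d (c x) (c y) := by
  obtain ⟨s, hs, has, -⟩ := hL.exists_between ha
  obtain ⟨P, rfl⟩ := mem_partitionSums_iff.1 hs
  exact ⟨P, has⟩

section ProductNorm

variable {n : ℕ} {Φ : (Fin n → ℝ) → ℝ}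

theorem apply_le_sum_mul_apply_one (hmono : ∀ p q : Fin n → ℝ, 0 ≤ q → q ≤ p → Φ q ≤ Φ p)
    (hhom : ∀ (l : ℝ) (q : Fin n → ℝ), 0 ≤ l → 0 ≤ q → Φ (l • q) = l * Φ q)
    {p : Fin n → ℝ} (hp : 0 ≤ p) : Φ p ≤ (∑ i, p i) * Φ 1 := by
  calc Φ p ≤ Φ ((∑ i, p i) • 1) :=
        hmono _ _ hp fun i => by simpa using single_le_sum (fun j _ => hp j) (mem_univ i)
    _ = (∑ i, p i) * Φ 1 := hhom _ _ (sum_nonneg fun i _ => hp i) zero_le_one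

theorem apply_le_apply_add_sum_sub_mul (hmono : ∀ p q : Fin n → ℝ, 0 ≤ q → q ≤ p → Φ q ≤ Φ p)
    (hsub : ∀ p q : Fin n → ℝ, 0 ≤ p → 0 ≤ q → Φ (p + q) ≤ Φ p + Φ q)
    (hhom : ∀ (l : ℝ) (q : Fin n → ℝ), 0 ≤ l → 0 ≤ q → Φ (l • q) = l * Φ q)
    {p q : Fin n → ℝ} (hq : 0 ≤ q) (hqp : q ≤ p) : Φ p ≤ Φ q + (∑ i, (p i - q i)) * Φ 1 := by
  have hpq : 0 ≤ p - q := sub_nonneg.2 hqp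
  calc Φ p = Φ (q + (p - q)) := by rw [add_sub_cancel]
    _ ≤ Φ q + Φ (p - q) := hsub _ _ hq hpq
    _ ≤ Φ q + (∑ i, (p i - q i)) * Φ 1 :=
      add_le_add_right (apply_le_sum_mul_apply_one hmono hhom hpq) _

variable {ι : Type*} [Fintype ι] {w : ι → ℝ} {l : Fin n → ℝ} {q : ι → Fin n → ℝ}

theorem sum_apply_le_of_le_smul (hmono : ∀ p q : Fin n → ℝ, 0 ≤ q → q ≤ p → Φ q ≤ Φ p)
    (hhom : ∀ (l : ℝ) (q : Fin n → ℝ), 0 ≤ l → 0 ≤ q → Φ (l • q) = l * Φ q)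
    (hw : ∀ j, 0 ≤ w j) (hw1 : ∑ j, w j = 1) (hl : 0 ≤ l) (hq : ∀ j, 0 ≤ q j)
    (hql : ∀ j, q j ≤ w j • l) : ∑ j, Φ (q j) ≤ Φ l :=
  calc ∑ j, Φ (q j) ≤ ∑ j, w j * Φ l :=
        sum_le_sum fun j _ => (hmono _ _ (hq j) (hql j)).trans_eq (hhom _ _ (hw j) hl)
    _ = Φ l := by rw [← sum_mul, hw1, one_mul]

theorem apply_le_sum_apply_add_mul (hmono : ∀ p q : Fin n → ℝ, 0 ≤ q → q ≤ p → Φ q ≤ Φ p)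
    (hsub : ∀ p q : Fin n → ℝ, 0 ≤ p → 0 ≤ q → Φ (p + q) ≤ Φ p + Φ q)
    (hhom : ∀ (l : ℝ) (q : Fin n → ℝ), 0 ≤ l → 0 ≤ q → Φ (l • q) = l * Φ q)
    (hw : ∀ j, 0 ≤ w j) (hw1 : ∑ j, w j = 1) (hl : 0 ≤ l) (hq : ∀ j, 0 ≤ q j)
    (hql : ∀ j, q j ≤ w j • l) : Φ l ≤ ∑ j, Φ (q j) + (∑ i, (l i - ∑ j, q j i)) * Φ 1 :=
  calc Φ l = ∑ j, Φ (w j • l) := by simp_rw [hhom _ _ (hw _) hl, ← sum_mul, hw1, one_mul]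
    _ ≤ ∑ j, (Φ (q j) + (∑ i, (w j * l i - q j i)) * Φ 1) := sum_le_sum fun j _ => by
      simpa using apply_le_apply_add_sum_sub_mul hmono hsub hhom (hq j) (hql j)
    _ = ∑ j, Φ (q j) + (∑ i, (l i - ∑ j, q j i)) * Φ 1 := by
      rw [sum_add_distrib, ← sum_mul, sum_comm]
      simp only [sum_sub_distrib, ← sum_mul, hw1, one_mul]

end ProductNorm

theorem stmt_9_general {n : ℕ} (Φ : (Fin n → ℝ) → ℝ)
    (hpos : ∀ q : Fin n → ℝ, 0 ≤ q → 0 ≤ Φ q)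
    (hmono : ∀ p q : Fin n → ℝ, 0 ≤ q → q ≤ p → Φ q ≤ Φ p)
    (hsub : ∀ p q : Fin n → ℝ, 0 ≤ p → 0 ≤ q → Φ (p + q) ≤ Φ p + Φ q)
    (hhom : ∀ (l : ℝ) (q : Fin n → ℝ), 0 ≤ l → 0 ≤ q → Φ (l • q) = l * Φ q)
    (X : Fin n → Type*) [∀ i, MetricSpace (X i)]
    (c : ∀ i, ℝ → X i) (l : Fin n → ℝ)
    (hlip : ∀ i, ∀ s ∈ Set.Icc (0 : ℝ) 1, ∀ t ∈ Set.Icc (0 : ℝ) 1,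
      dist (c i s) (c i t) ≤ l i * |s - t|)
    (hlen : ∀ i, IsLUB (partitionSums dist (c i)) (l i)) :
    IsLUB (partitionSums (fun x y : ∀ i, X i => Φ (fun i => dist (x i) (y i)))
      (fun t i => c i t)) (Φ l) := by
  have hl : 0 ≤ l := fun i => dist_nonneg.trans (by simpa using hlip i 0 (by simp) 1 (by simp))
  have hql (P : UnitIntervalPartition) (j : Fin P.k) :
      (fun i => dist (c i (P.t j.castSucc)) (c i (P.t j.succ))) ≤ P.step j • l :=
    fun i => P.dist_le_step_mul (hlip i) j
  refine ⟨?_, fun b hb => ?_⟩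
  · rintro s hs
    obtain ⟨P, rfl⟩ := mem_partitionSums_iff.1 hs
    exact sum_apply_le_of_le_smul hmono hhom P.step_nonneg P.sum_step hl
      (fun _ _ => dist_nonneg) (hql P)
  have hΦ1 : 0 ≤ Φ 1 := hpos 1 zero_le_one
  refine le_of_forall_pos_le_add_mul (mul_nonneg n.cast_nonneg hΦ1) fun δ hδ => ?_
  choose P hP using fun i => exists_lt_sum_of_isLUB (hlen i) (sub_lt_self (l i) hδ)
  obtain ⟨Q, hQ⟩ := UnitIntervalPartition.exists_refinement (List.ofFn P)
  have hdefect (i : Fin n) : l i - Q.sum (fun x y => dist (c i x) (c i y)) ≤ δ := by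
    linarith [hP i, hQ (P i) (List.mem_ofFn.2 ⟨i, rfl⟩) (fun x y => dist (c i x) (c i y))
      (fun _ _ => dist_nonneg) (fun _ _ _ => dist_triangle _ _ _)]
  calc Φ l ≤ Q.sum (fun x y => Φ fun i => dist (c i x) (c i y))
        + (∑ i, (l i - Q.sum fun x y => dist (c i x) (c i y))) * Φ 1 :=
      apply_le_sum_apply_add_mul hmono hsub hhom Q.step_nonneg Q.sum_step hl
        (fun _ _ => dist_nonneg) (hql Q)
    _ ≤ b + (#univ • δ) * Φ 1 := by
      grw [hb (mem_partitionSums_iff.2 ⟨Q, rfl⟩), sum_le_card_nsmul _ _ _ fun i _ => hdefect i]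
    _ = b + n * Φ 1 * δ := by
      rw [card_univ, Fintype.card_fin, nsmul_eq_mul]
      ring

/-- Lemma 5: If `Φ` satisfies (1)-(4) and `cᵢ : [0,1] → Xᵢ` are
curves parameterized proportionally to arclength with lengths `lᵢ`, then the
`d_Φ`-length of the product curve equals `Φ(l₁,...,lₙ)`. -/
theorem stmt_9 {n : ℕ} (Φ : (Fin n → ℝ) → ℝ)
    (hpos : ∀ q : Fin n → ℝ, 0 ≤ q → 0 ≤ Φ q)
    (hdef : ∀ q : Fin n → ℝ, 0 ≤ q → (Φ q = 0 ↔ q = 0))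
    (hmono : ∀ p q : Fin n → ℝ, 0 ≤ q → q ≤ p → Φ q ≤ Φ p)
    (hsub : ∀ p q : Fin n → ℝ, 0 ≤ p → 0 ≤ q → Φ (p + q) ≤ Φ p + Φ q)
    (hhom : ∀ (l : ℝ) (q : Fin n → ℝ), 0 ≤ l → 0 ≤ q → Φ (l • q) = l * Φ q)
    (X : Fin n → Type*) [∀ i, MetricSpace (X i)]
    (c : ∀ i, ℝ → X i) (l : Fin n → ℝ)
    (hlip : ∀ i, ∀ s ∈ Set.Icc (0 : ℝ) 1, ∀ t ∈ Set.Icc (0 : ℝ) 1,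
      dist (c i s) (c i t) ≤ l i * |s - t|)
    (hlen : ∀ i, IsLUB (partitionSums dist (c i)) (l i)) :
    IsLUB (partitionSums (fun x y : ∀ i, X i => Φ (fun i => dist (x i) (y i)))
      (fun t i => c i t)) (Φ l) :=
  stmt_9_general Φ hpos hmono hsub hhom X c l hlip hlen
end

section
/- Let Ψ be a norm on ℝ² with strictly convex unit ball, and suppose v, v₁, v₂ ∈ [0,∞)² satisfy v ≤ v₁ + v₂ componentwise and Ψ(v₁) + Ψ(v₂) = Ψ(v), with Ψ monotone on the positive quadrant. Then v₁ = λ₁v and v₂ = λ₂v for some λ₁, λ₂ ≥ 0 with λ₁ + λ₂ = 1. -/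
/-!
Monotonicity and the triangle inequality squeeze `Ψ v ≤ Ψ (v₁ + v₂) ≤ Ψ v₁ + Ψ v₂ = Ψ v`.
The first equality forces `v = v₁ + v₂`: for `0 ≤ a ≤ b` with `Ψ a = Ψ b`, monotonicity gives
`2 Ψ a = Ψ (a + a) ≤ Ψ (a + b)`, so the triangle inequality is an equality for `a, b`, strict
convexity makes `b` a positive multiple of `a`, and equal norms make the multiple `1`.
The second equality then puts `v₁` and `v₂` on a common ray through `v = v₁ + v₂`.
-/

section

variable {E : Type*} [AddCommGroup E] [Module ℝ E] {Ψ : E → ℝ}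

theorem sameRay_of_map_add_eq
    (hstrict : ∀ x y : E, x ≠ 0 → y ≠ 0 → Ψ (x + y) = Ψ x + Ψ y → ∃ c : ℝ, 0 < c ∧ y = c • x)
    {x y : E} (h : Ψ (x + y) = Ψ x + Ψ y) : SameRay ℝ x y := by
  rcases eq_or_ne x 0 with rfl | hx
  · exact SameRay.zero_left y
  rcases eq_or_ne y 0 with rfl | hy
  · exact SameRay.zero_right x
  obtain ⟨c, hc, rfl⟩ := hstrict x y hx hy h
  exact SameRay.sameRay_pos_smul_right x hc

theorem eq_of_le_of_map_eq [PartialOrder E] [IsOrderedAddMonoid E]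
    (hdef : ∀ x : E, Ψ x = 0 ↔ x = 0)
    (hadd : ∀ x y : E, Ψ (x + y) ≤ Ψ x + Ψ y)
    (hsmul : ∀ (c : ℝ) (x : E), Ψ (c • x) = |c| * Ψ x)
    (hstrict : ∀ x y : E, x ≠ 0 → y ≠ 0 → Ψ (x + y) = Ψ x + Ψ y → ∃ c : ℝ, 0 < c ∧ y = c • x)
    (hmono : ∀ p q : E, 0 ≤ q → q ≤ p → Ψ q ≤ Ψ p)
    {a b : E} (ha : 0 ≤ a) (hab : a ≤ b) (hΨ : Ψ a = Ψ b) : a = b := by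
  rcases eq_or_ne a 0 with rfl | ha0
  · exact ((hdef b).mp (hΨ ▸ (hdef 0).mpr rfl)).symm
  have hdouble : Ψ (a + a) = Ψ a + Ψ b := by
    rw [← two_smul ℝ a, hsmul, ← hΨ, abs_two, two_mul]
  have hsum : Ψ (a + b) = Ψ a + Ψ b :=
    le_antisymm (hadd a b) (hdouble ▸ hmono _ _ (add_nonneg ha ha) (add_le_add_right hab a))
  obtain ⟨c, hc, rfl⟩ := (sameRay_of_map_add_eq hstrict hsum).exists_nonneg_left ha0
  have hΨa : Ψ a ≠ 0 := fun h => ha0 ((hdef a).mp h)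
  have hc1 : c = 1 := by
    rw [hsmul, abs_of_nonneg hc] at hΨ
    exact (mul_eq_right₀ hΨa).mp hΨ.symm
  rw [hc1, one_smul]

end

theorem stmt_13_general (Ψ : (Fin 2 → ℝ) → ℝ)
    (hdef : ∀ x : Fin 2 → ℝ, Ψ x = 0 ↔ x = 0)
    (hadd : ∀ x y : Fin 2 → ℝ, Ψ (x + y) ≤ Ψ x + Ψ y)
    (hsmul : ∀ (c : ℝ) (x : Fin 2 → ℝ), Ψ (c • x) = |c| * Ψ x)
    (hstrict : ∀ x y : Fin 2 → ℝ, x ≠ 0 → y ≠ 0 → Ψ (x + y) = Ψ x + Ψ y →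
      ∃ c : ℝ, 0 < c ∧ y = c • x)
    (hmono : ∀ p q : Fin 2 → ℝ, 0 ≤ q → q ≤ p → Ψ q ≤ Ψ p)
    (v v₁ v₂ : Fin 2 → ℝ) (hv : 0 ≤ v)
    (hle : v ≤ v₁ + v₂) (heq : Ψ v₁ + Ψ v₂ = Ψ v) :
    ∃ l₁ l₂ : ℝ, 0 ≤ l₁ ∧ 0 ≤ l₂ ∧ l₁ + l₂ = 1 ∧ v₁ = l₁ • v ∧ v₂ = l₂ • v := by
  have hΨsum : Ψ v = Ψ (v₁ + v₂) := le_antisymm (hmono _ _ hv hle) (heq ▸ hadd v₁ v₂)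
  obtain rfl : v = v₁ + v₂ := eq_of_le_of_map_eq hdef hadd hsmul hstrict hmono hv hle hΨsum
  exact (sameRay_of_map_add_eq hstrict heq.symm).exists_eq_smul_add

/-- If `Ψ` is a monotone norm on `ℝ²` with strictly convex unit
ball and `v ≤ v₁ + v₂` componentwise with `Ψ(v₁) + Ψ(v₂) = Ψ(v)`, then
`v₁ = λ₁ v`, `v₂ = λ₂ v` with `λ₁ + λ₂ = 1`, `λᵢ ≥ 0`. -/
theorem stmt_13 (Ψ : (Fin 2 → ℝ) → ℝ)
    (hdef : ∀ x : Fin 2 → ℝ, Ψ x = 0 ↔ x = 0)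
    (hadd : ∀ x y : Fin 2 → ℝ, Ψ (x + y) ≤ Ψ x + Ψ y)
    (hsmul : ∀ (c : ℝ) (x : Fin 2 → ℝ), Ψ (c • x) = |c| * Ψ x)
    (hstrict : ∀ x y : Fin 2 → ℝ, x ≠ 0 → y ≠ 0 → Ψ (x + y) = Ψ x + Ψ y →
      ∃ c : ℝ, 0 < c ∧ y = c • x)
    (hmono : ∀ p q : Fin 2 → ℝ, 0 ≤ q → q ≤ p → Ψ q ≤ Ψ p)
    (v v₁ v₂ : Fin 2 → ℝ) (hv : 0 ≤ v) (hv₁ : 0 ≤ v₁) (hv₂ : 0 ≤ v₂)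
    (hle : v ≤ v₁ + v₂) (heq : Ψ v₁ + Ψ v₂ = Ψ v) :
    ∃ l₁ l₂ : ℝ, 0 ≤ l₁ ∧ 0 ≤ l₂ ∧ l₁ + l₂ = 1 ∧ v₁ = l₁ • v ∧ v₂ = l₂ • v :=
  stmt_13_general Ψ hdef hadd hsmul hstrict hmono v v₁ v₂ hv hle heq
end

section
/- Let Φ : [0,∞)² → [0,∞) be induced by a norm with strictly convex unit ball. If (X₁,d₁) and (X₂,d₂) are uniquely geodesic metric spaces, then (X₁ × X₂, d_Φ) is uniquely geodesic, and every geodesic in the product is of the form t ↦ (c₁(t), c₂(t)) where cᵢ are affinely reparameterized geodesics in Xᵢ. -/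
/-!
`ψ x = Φ |x|` is a seminorm on `ℝ²`. Being convex and even in each coordinate, it is monotone
on the nonnegative quadrant, and strict convexity makes it definite and strictly monotone there.
For a geodesic `γ` from `p` to `q` in the product, the vector of coordinate distances
`v x y = (d₁ x₁ y₁, d₂ x₂ y₂)` satisfies `v p q ≤ v p (γ t) + v (γ t) q`, while the `ψ`-lengths
of the two summands add up to `ψ (v p q)`. Equality in the triangle inequality for `ψ` puts the
summands on a ray, and strict monotonicity forces `v p (γ t) = t • v p q`; comparing with the
triangle inequality again gives `v (γ s) (γ t) = |s - t| • v p q`. Hence both components of `γ`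
are geodesics, and uniqueness in the factors yields uniqueness in the product.
-/

/-- `γ : [0,1] → X` is a constant-speed geodesic from `x` to `y` with respect to
the distance function `d`. -/
def IsConstSpeedGeodesic {X : Type*} (d : X → X → ℝ) (γ : ℝ → X) (x y : X) : Prop :=
  γ 0 = x ∧ γ 1 = y ∧
    ∀ s ∈ Set.Icc (0 : ℝ) 1, ∀ t ∈ Set.Icc (0 : ℝ) 1, d (γ s) (γ t) = |s - t| * d x y

/-- `(X, d)` is uniquely geodesic: any two points are joined by a geodesic which
is unique (on the parameter interval `[0,1]`). -/
def IsUniquelyGeodesicWith {X : Type*} (d : X → X → ℝ) : Prop :=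
  ∀ x y : X, (∃ γ : ℝ → X, IsConstSpeedGeodesic d γ x y) ∧
    ∀ γ γ' : ℝ → X, IsConstSpeedGeodesic d γ x y → IsConstSpeedGeodesic d γ' x y →
      ∀ t ∈ Set.Icc (0 : ℝ) 1, γ t = γ' t

open Set Function

namespace Seminorm

section StrictlyConvex

variable {E : Type*} [AddCommGroup E] [Module ℝ E]

def IsStrictlyConvex (N : Seminorm ℝ E) : Prop :=
  ∀ x y : E, x ≠ 0 → y ≠ 0 → N (x + y) = N x + N y → ∃ c : ℝ, 0 < c ∧ y = c • x

variable {N : Seminorm ℝ E}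

theorem IsStrictlyConvex.eq_zero_of_map_eq_zero (hN : N.IsStrictlyConvex) {x : E}
    (hx : N x = 0) : x = 0 := by
  by_contra hne
  obtain ⟨c, hc, hcx⟩ := hN x (-x) hne (neg_ne_zero.2 hne) (by simp [hx])
  have : (1 + c) • x = 0 := by rw [add_smul, one_smul, ← hcx, add_neg_cancel]
  exact hne ((smul_eq_zero.1 this).resolve_left (by positivity))

theorem IsStrictlyConvex.sameRay_of_map_add_eq (hN : N.IsStrictlyConvex) {x y : E}
    (h : N (x + y) = N x + N y) : SameRay ℝ x y := by
  rcases eq_or_ne x 0 with rfl | hx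
  · exact SameRay.zero_left y
  rcases eq_or_ne y 0 with rfl | hy
  · exact SameRay.zero_right x
  obtain ⟨c, hc, rfl⟩ := hN x y hx hy h
  exact SameRay.sameRay_pos_smul_right x hc

theorem IsStrictlyConvex.eq_smul_add_of_map_add_eq (hN : N.IsStrictlyConvex) {x y : E} {t : ℝ}
    (h : N (x + y) = N x + N y) (hx : N x = t * N (x + y)) : x = t • (x + y) := by
  obtain ⟨a, -, ha, -, -, hxa, -⟩ := (hN.sameRay_of_map_add_eq h).exists_eq_smul_add
  rcases eq_or_ne (N (x + y)) 0 with h0 | h0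
  · rw [hN.eq_zero_of_map_eq_zero h0, smul_zero] at hxa ⊢
    exact hxa
  · have hNx : N x = a * N (x + y) := by
      rw [congrArg N hxa, map_smul_eq_mul, Real.norm_of_nonneg ha]
    rwa [mul_right_cancel₀ h0 (hNx.symm.trans hx)] at hxa

end StrictlyConvex

section Absolute

variable {ι : Type*}

def IsAbsolute (N : Seminorm ℝ (ι → ℝ)) : Prop :=
  ∀ x, N |x| = N x

variable {N : Seminorm ℝ (ι → ℝ)}

theorem IsAbsolute.map_update_le [DecidableEq ι] (hN : N.IsAbsolute) (y : ι → ℝ) (i : ι)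
    {a b : ℝ} (hab : |a| ≤ b) : N (update y i a) ≤ N (update y i b) := by
  have hconv : ConvexOn ℝ univ fun c => N (update y i c) := by
    refine ⟨convex_univ, fun a _ b _ μ ν hμ hν hμν => ?_⟩
    have hupd : update y i (μ • a + ν • b) = μ • update y i a + ν • update y i b := by
      ext j
      rcases eq_or_ne j i with rfl | hj
      · simp
      · simp only [update_of_ne hj, Pi.add_apply, Pi.smul_apply, smul_eq_mul]
        linear_combination (-y j) * hμν
    simpa only [hupd] using N.convexOn.2 (mem_univ _) (mem_univ _) hμ hν hμν
  have heven : N (update y i (-b)) = N (update y i b) := by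
    rw [← hN, ← hN (update y i b)]
    congr 1
    ext j
    rcases eq_or_ne j i with rfl | hj
    · simp
    · simp [hj]
  simpa only [heven, max_self] using
    hconv.le_max_of_mem_Icc (mem_univ (-b)) (mem_univ b) (abs_le.1 hab)

theorem IsAbsolute.map_mono [Fintype ι] (hN : N.IsAbsolute) {x y : ι → ℝ} (hx : 0 ≤ x)
    (hxy : x ≤ y) : N x ≤ N y := by
  classical
  suffices ∀ s : Finset ι, ∀ x, 0 ≤ x → x ≤ y → (∀ i ∉ s, x i = y i) → N x ≤ N y
    from this Finset.univ x hx hxy (by simp)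
  intro s
  induction s using Finset.induction_on with
  | empty =>
    intro x _ _ hxy
    rw [show x = y from funext fun i => hxy i (Finset.notMem_empty i)]
  | insert i s _ ih =>
    intro x hx hxy hxs
    calc N x = N (update x i (x i)) := by rw [update_eq_self]
      _ ≤ N (update x i (y i)) :=
        hN.map_update_le x i (by rw [abs_of_nonneg (hx i)]; exact hxy i)
      _ ≤ N y := by
        refine ih _ (le_update_iff.2 ⟨(hx i).trans (hxy i), fun j _ => hx j⟩)
          (update_le_iff.2 ⟨le_rfl, fun j _ => hxy j⟩) fun j hj => ?_
        rcases eq_or_ne j i with rfl | hji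
        · simp
        · rw [update_of_ne hji]
          exact hxs j (by simp [hji, hj])

theorem eq_of_le_of_map_eq [Fintype ι] (hS : N.IsStrictlyConvex) (hA : N.IsAbsolute)
    {x y : ι → ℝ} (hx : 0 ≤ x) (hxy : x ≤ y) (hN : N x = N y) : x = y := by
  have hmid : N x ≤ N ((2 : ℝ)⁻¹ • (x + y)) :=
    hA.map_mono hx fun i => by
      simp only [Pi.smul_apply, Pi.add_apply, smul_eq_mul]
      linarith [hxy i]
  rw [map_smul_eq_mul, Real.norm_of_nonneg (by norm_num)] at hmid
  have hadd : N (x + y) = N x + N y := le_antisymm (map_add_le_add N x y) (by linarith)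
  have hx_mid := hS.eq_smul_add_of_map_add_eq (t := 2⁻¹) hadd (by rw [hadd, ← hN]; ring)
  ext i
  have := congrFun hx_mid i
  simp only [Pi.smul_apply, Pi.add_apply, smul_eq_mul] at this
  linarith

theorem eq_smul_of_le_add [Fintype ι] (hS : N.IsStrictlyConvex) (hA : N.IsAbsolute)
    {u v w : ι → ℝ} {t : ℝ} (hw : 0 ≤ w) (hwuv : w ≤ u + v) (hu : N u = t * N w)
    (hv : N v = (1 - t) * N w) : u = t • w := by
  have hsum : N u + N v = N w := by rw [hu, hv]; ring
  have hle : N w ≤ N (u + v) := hA.map_mono hw hwuv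
  have hadd : N (u + v) = N u + N v := le_antisymm (map_add_le_add N u v) (hsum ▸ hle)
  obtain rfl : w = u + v := eq_of_le_of_map_eq hS hA hw hwuv (by linarith)
  exact hS.eq_smul_add_of_map_add_eq hadd hu

end Absolute

end Seminorm

open Seminorm

section ProductGeodesics

variable {X₁ X₂ : Type*} [PseudoMetricSpace X₁] [PseudoMetricSpace X₂]

def prodDistVec (p q : X₁ × X₂) : Fin 2 → ℝ :=
  ![dist p.1 q.1, dist p.2 q.2]

theorem prodDistVec_nonneg (p q : X₁ × X₂) : 0 ≤ prodDistVec p q := by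
  intro i
  fin_cases i <;> simp [prodDistVec, dist_nonneg]

theorem prodDistVec_comm (p q : X₁ × X₂) : prodDistVec p q = prodDistVec q p := by
  simp [prodDistVec, dist_comm]

theorem prodDistVec_triangle (p q r : X₁ × X₂) :
    prodDistVec p r ≤ prodDistVec p q + prodDistVec q r := by
  intro i
  fin_cases i <;> simp [prodDistVec, dist_triangle]

variable {N : Seminorm ℝ (Fin 2 → ℝ)} {p q : X₁ × X₂} {γ : ℝ → X₁ × X₂}

theorem IsConstSpeedGeodesic.prodMk {γ₁ : ℝ → X₁} {γ₂ : ℝ → X₂}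
    (h₁ : IsConstSpeedGeodesic (fun a b : X₁ => dist a b) γ₁ p.1 q.1)
    (h₂ : IsConstSpeedGeodesic (fun a b : X₂ => dist a b) γ₂ p.2 q.2) :
    IsConstSpeedGeodesic (fun p q => N (prodDistVec p q)) (fun t => (γ₁ t, γ₂ t)) p q := by
  refine ⟨Prod.ext h₁.1 h₂.1, Prod.ext h₁.2.1 h₂.2.1, fun s hs t ht => ?_⟩
  have hvec : prodDistVec (γ₁ s, γ₂ s) (γ₁ t, γ₂ t) = |s - t| • prodDistVec p q := by
    ext i
    fin_cases i <;> simp [prodDistVec, h₁.2.2 s hs t ht, h₂.2.2 s hs t ht]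
  simp only [hvec, map_smul_eq_mul, Real.norm_eq_abs, abs_abs]

theorem IsConstSpeedGeodesic.prodDistVec_left (hS : N.IsStrictlyConvex) (hA : N.IsAbsolute)
    (hγ : IsConstSpeedGeodesic (fun p q => N (prodDistVec p q)) γ p q) {t : ℝ}
    (ht : t ∈ Icc (0 : ℝ) 1) : prodDistVec p (γ t) = t • prodDistVec p q := by
  obtain ⟨h0, h1, hd⟩ := hγ
  refine eq_smul_of_le_add hS hA (prodDistVec_nonneg p q) (prodDistVec_triangle p (γ t) q)
    ?_ ?_
  · simpa [h0, abs_of_nonneg ht.1] using hd 0 ⟨le_rfl, zero_le_one⟩ t ht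
  · simpa [h1, abs_of_nonpos (sub_nonpos.2 ht.2)] using hd t ht 1 ⟨zero_le_one, le_rfl⟩

theorem IsConstSpeedGeodesic.prodDistVec_eq (hS : N.IsStrictlyConvex) (hA : N.IsAbsolute)
    (hγ : IsConstSpeedGeodesic (fun p q => N (prodDistVec p q)) γ p q) {s t : ℝ}
    (hs : s ∈ Icc (0 : ℝ) 1) (ht : t ∈ Icc (0 : ℝ) 1) :
    prodDistVec (γ s) (γ t) = |s - t| • prodDistVec p q := by
  wlog hst : s ≤ t generalizing s t
  · rw [prodDistVec_comm, abs_sub_comm]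
    exact this ht hs (le_of_not_ge hst)
  refine (eq_of_le_of_map_eq hS hA (smul_nonneg (abs_nonneg _) (prodDistVec_nonneg p q))
    ?_ ?_).symm
  · have htri := prodDistVec_triangle p (γ s) (γ t)
    rw [hγ.prodDistVec_left hS hA hs, hγ.prodDistVec_left hS hA ht] at htri
    rw [abs_of_nonpos (sub_nonpos.2 hst), neg_sub, sub_smul]
    exact sub_le_iff_le_add'.2 htri
  · rw [map_smul_eq_mul, Real.norm_eq_abs, abs_abs]
    exact (hγ.2.2 s hs t ht).symm

theorem IsConstSpeedGeodesic.fst_and_snd (hS : N.IsStrictlyConvex) (hA : N.IsAbsolute)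
    (hγ : IsConstSpeedGeodesic (fun p q => N (prodDistVec p q)) γ p q) :
    IsConstSpeedGeodesic (fun a b : X₁ => dist a b) (fun t => (γ t).1) p.1 q.1 ∧
      IsConstSpeedGeodesic (fun a b : X₂ => dist a b) (fun t => (γ t).2) p.2 q.2 := by
  refine ⟨⟨by simp [hγ.1], by simp [hγ.2.1], fun s hs t ht => ?_⟩,
    ⟨by simp [hγ.1], by simp [hγ.2.1], fun s hs t ht => ?_⟩⟩
  · simpa [prodDistVec] using congrFun (hγ.prodDistVec_eq hS hA hs ht) 0
  · simpa [prodDistVec] using congrFun (hγ.prodDistVec_eq hS hA hs ht) 1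

theorem isUniquelyGeodesicWith_prod (hS : N.IsStrictlyConvex) (hA : N.IsAbsolute)
    (h₁ : IsUniquelyGeodesicWith (fun a b : X₁ => dist a b))
    (h₂ : IsUniquelyGeodesicWith (fun a b : X₂ => dist a b)) :
    IsUniquelyGeodesicWith (fun p q : X₁ × X₂ => N (prodDistVec p q)) := by
  intro p q
  obtain ⟨⟨γ₁, hγ₁⟩, hu₁⟩ := h₁ p.1 q.1
  obtain ⟨⟨γ₂, hγ₂⟩, hu₂⟩ := h₂ p.2 q.2
  refine ⟨⟨_, hγ₁.prodMk hγ₂⟩, fun γ γ' hγ hγ' t ht => Prod.ext ?_ ?_⟩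
  · exact hu₁ _ _ (hγ.fst_and_snd hS hA).1 (hγ'.fst_and_snd hS hA).1 t ht
  · exact hu₂ _ _ (hγ.fst_and_snd hS hA).2 (hγ'.fst_and_snd hS hA).2 t ht

end ProductGeodesics

theorem stmt_14_general {X₁ X₂ : Type*} [MetricSpace X₁] [MetricSpace X₂]
    (Φ : (Fin 2 → ℝ) → ℝ)
    (hadd : ∀ x y : Fin 2 → ℝ,
      Φ (fun i => |(x + y) i|) ≤ Φ (fun i => |x i|) + Φ (fun i => |y i|))
    (hsmul : ∀ (c : ℝ) (x : Fin 2 → ℝ),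
      Φ (fun i => |(c • x) i|) = |c| * Φ (fun i => |x i|))
    (hstrict : ∀ x y : Fin 2 → ℝ, x ≠ 0 → y ≠ 0 →
      Φ (fun i => |(x + y) i|) = Φ (fun i => |x i|) + Φ (fun i => |y i|) →
      ∃ c : ℝ, 0 < c ∧ y = c • x)
    (h₁ : IsUniquelyGeodesicWith (fun a b : X₁ => dist a b))
    (h₂ : IsUniquelyGeodesicWith (fun a b : X₂ => dist a b)) :
    IsUniquelyGeodesicWith
      (fun p q : X₁ × X₂ => Φ ![dist p.1 q.1, dist p.2 q.2]) ∧
    ∀ (p q : X₁ × X₂) (γ : ℝ → X₁ × X₂),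
      IsConstSpeedGeodesic (fun p q : X₁ × X₂ => Φ ![dist p.1 q.1, dist p.2 q.2]) γ p q →
      (IsConstSpeedGeodesic (fun a b : X₁ => dist a b) (fun t => (γ t).1) p.1 q.1 ∧
       IsConstSpeedGeodesic (fun a b : X₂ => dist a b) (fun t => (γ t).2) p.2 q.2) := by
  let N : Seminorm ℝ (Fin 2 → ℝ) :=
    Seminorm.of (fun x => Φ fun i => |x i|) hadd fun c x => by
      rw [Real.norm_eq_abs]
      exact hsmul c x
  have hS : N.IsStrictlyConvex := hstrict
  have hA : N.IsAbsolute := fun x => by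
    change Φ _ = Φ _
    simp only [Pi.abs_apply, abs_abs]
  have hd : (fun p q : X₁ × X₂ => Φ ![dist p.1 q.1, dist p.2 q.2]) =
      fun p q => N (prodDistVec p q) := by
    funext p q
    change Φ _ = Φ _
    congr 1
    funext i
    exact (abs_of_nonneg (prodDistVec_nonneg p q i)).symm
  rw [hd]
  exact ⟨isUniquelyGeodesicWith_prod hS hA h₁ h₂, fun p q γ hγ => hγ.fst_and_snd hS hA⟩

/-- If `Φ` is induced by a norm with strictly convex unit ball and
`X₁`, `X₂` are uniquely geodesic, then `(X₁ × X₂, d_Φ)` is uniquely geodesic and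
every geodesic of the product has components which are constant-speed
(affinely reparameterized) geodesics of the factors. -/
theorem stmt_14 {X₁ X₂ : Type*} [MetricSpace X₁] [MetricSpace X₂]
    (Φ : (Fin 2 → ℝ) → ℝ)
    (hpos : ∀ q : Fin 2 → ℝ, 0 ≤ q → 0 ≤ Φ q)
    (hdef : ∀ x : Fin 2 → ℝ, Φ (fun i => |x i|) = 0 ↔ x = 0)
    (hadd : ∀ x y : Fin 2 → ℝ,
      Φ (fun i => |(x + y) i|) ≤ Φ (fun i => |x i|) + Φ (fun i => |y i|))
    (hsmul : ∀ (c : ℝ) (x : Fin 2 → ℝ),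
      Φ (fun i => |(c • x) i|) = |c| * Φ (fun i => |x i|))
    (hstrict : ∀ x y : Fin 2 → ℝ, x ≠ 0 → y ≠ 0 →
      Φ (fun i => |(x + y) i|) = Φ (fun i => |x i|) + Φ (fun i => |y i|) →
      ∃ c : ℝ, 0 < c ∧ y = c • x)
    (h₁ : IsUniquelyGeodesicWith (fun a b : X₁ => dist a b))
    (h₂ : IsUniquelyGeodesicWith (fun a b : X₂ => dist a b)) :
    IsUniquelyGeodesicWith
      (fun p q : X₁ × X₂ => Φ ![dist p.1 q.1, dist p.2 q.2]) ∧
    ∀ (p q : X₁ × X₂) (γ : ℝ → X₁ × X₂),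
      IsConstSpeedGeodesic (fun p q : X₁ × X₂ => Φ ![dist p.1 q.1, dist p.2 q.2]) γ p q →
      (IsConstSpeedGeodesic (fun a b : X₁ => dist a b) (fun t => (γ t).1) p.1 q.1 ∧
       IsConstSpeedGeodesic (fun a b : X₂ => dist a b) (fun t => (γ t).2) p.2 q.2) :=
  stmt_14_general Φ hadd hsmul hstrict h₁ h₂
end

section
/- Let A be an affine space over a normed vector space (V,|·|), Φ : [0,∞)^n → [0,∞) satisfy conditions (1)–(4) with the associated Ψ having strictly convex unit ball, and let φ : A → (∏Xᵢ, d_Φ) be an isometric embedding with components φᵢ. Define αᵢ(a,v) = dᵢ(φᵢ(a), φᵢ(a+v)). Then αᵢ(a,v) = αᵢ(a+v,v) for all a ∈ A, v ∈ V and all i. -/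
/-!
Put `b = a + v` and `c = b + v`. The triangle inequality in each factor and monotonicity of `Φ`
give `Φ(α(a,v)) + Φ(α(b,v)) = 2‖v‖ = d_Φ(φ(a),φ(c)) ≤ Φ(α(a,v) + α(b,v))`, so subadditivity is an
equality there. By strict convexity `α(b,v)` is a positive multiple of `α(a,v)`, and as both
vectors have the same `Φ`-value `‖v‖`, homogeneity forces the multiple to be `1`.
-/

/-- The distance `d_Φ` on a product of metric spaces. -/
def phiDist {ι : Type*} {X : ι → Type*} [∀ i, PseudoMetricSpace (X i)]
    (Φ : (ι → ℝ) → ℝ) (p q : ∀ i, X i) : ℝ :=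
  Φ fun i => dist (p i) (q i)

section StrictlyConvex

variable {ι : Type*} (Φ : (ι → ℝ) → ℝ)
  (hhom : ∀ (l : ℝ) (q : ι → ℝ), 0 ≤ l → 0 ≤ q → Φ (l • q) = l * Φ q)
  (hstrict : ∀ x y : ι → ℝ, 0 ≤ x → 0 ≤ y → x ≠ 0 → y ≠ 0 →
    Φ (x + y) = Φ x + Φ y → ∃ c : ℝ, 0 < c ∧ y = c • x)
include hhom hstrict

theorem eq_of_map_eq_of_map_add_eq {x y : ι → ℝ} (hx : 0 ≤ x) (hy : 0 ≤ y)
    (hxy : Φ x = Φ y) (hne : Φ x ≠ 0) (hadd : Φ (x + y) = Φ x + Φ y) : x = y := by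
  have hzero : Φ 0 = 0 := by simpa using hhom 0 0 le_rfl le_rfl
  have hx0 : x ≠ 0 := by rintro rfl; exact hne hzero
  have hy0 : y ≠ 0 := by rintro rfl; exact hne (hxy.trans hzero)
  obtain ⟨c, hc, rfl⟩ := hstrict x y hx hy hx0 hy0 hadd
  have hc1 : c = 1 := by
    rw [hhom c x hc.le hx] at hxy
    exact (mul_eq_right₀ hne).mp hxy.symm
  rw [hc1, one_smul]

variable (hmono : ∀ p q : ι → ℝ, 0 ≤ q → q ≤ p → Φ q ≤ Φ p)
  (hsub : ∀ p q : ι → ℝ, 0 ≤ p → 0 ≤ q → Φ (p + q) ≤ Φ p + Φ q)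
include hmono hsub

theorem dist_apply_eq_of_phiDist_add_le {X : ι → Type*} [∀ i, PseudoMetricSpace (X i)]
    {p q r : ∀ i, X i} (hpq : phiDist Φ p q = phiDist Φ q r) (hne : phiDist Φ p q ≠ 0)
    (hpr : phiDist Φ p q + phiDist Φ q r ≤ phiDist Φ p r) (i : ι) :
    dist (p i) (q i) = dist (q i) (r i) := by
  have hx : (0 : ι → ℝ) ≤ fun i => dist (p i) (q i) := fun _ => dist_nonneg
  have hy : (0 : ι → ℝ) ≤ fun i => dist (q i) (r i) := fun _ => dist_nonneg
  have htri : phiDist Φ p r ≤ Φ ((fun i => dist (p i) (q i)) + fun i => dist (q i) (r i)) :=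
    hmono _ _ (fun _ => dist_nonneg) fun j => dist_triangle (p j) (q j) (r j)
  have hadd := le_antisymm (hsub _ _ hx hy) (hpr.trans htri)
  exact congrFun (eq_of_map_eq_of_map_add_eq Φ hhom hstrict hx hy hpq hne hadd) i

end StrictlyConvex

theorem stmt_15_general {n : ℕ} (Φ : (Fin n → ℝ) → ℝ)
    (hmono : ∀ p q : Fin n → ℝ, 0 ≤ q → q ≤ p → Φ q ≤ Φ p)
    (hsub : ∀ p q : Fin n → ℝ, 0 ≤ p → 0 ≤ q → Φ (p + q) ≤ Φ p + Φ q)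
    (hhom : ∀ (l : ℝ) (q : Fin n → ℝ), 0 ≤ l → 0 ≤ q → Φ (l • q) = l * Φ q)
    (hstrict : ∀ x y : Fin n → ℝ, 0 ≤ x → 0 ≤ y → x ≠ 0 → y ≠ 0 →
      Φ (x + y) = Φ x + Φ y → ∃ c : ℝ, 0 < c ∧ y = c • x)
    (V : Type*) [NormedAddCommGroup V] [NormedSpace ℝ V]
    (A : Type*) [AddTorsor V A]
    (X : Fin n → Type*) [∀ i, MetricSpace (X i)]
    (φ : A → ∀ i, X i)
    (hiso : ∀ a b : A, Φ (fun i => dist (φ a i) (φ b i)) = ‖b -ᵥ a‖) :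
    ∀ (a : A) (v : V) (i : Fin n),
      dist (φ a i) (φ (v +ᵥ a) i) = dist (φ (v +ᵥ a) i) (φ (v +ᵥ (v +ᵥ a)) i) := by
  intro a v i
  rcases eq_or_ne v 0 with rfl | hv
  · simp
  have hstep : ∀ b, phiDist Φ (φ b) (φ (v +ᵥ b)) = ‖v‖ := fun b => by
    rw [phiDist, hiso, vadd_vsub]
  refine dist_apply_eq_of_phiDist_add_le Φ hhom hstrict hmono hsub ?_ ?_ ?_ i
  · rw [hstep, hstep]
  · rwa [hstep, norm_ne_zero_iff]
  · rw [hstep, hstep, phiDist, hiso, vadd_vadd, vadd_vsub, ← two_smul ℝ v, norm_smul,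
      Real.norm_two, two_mul]

/-- For an isometric embedding `φ` of a normed affine space `A`
into a `Φ`-product (with `Ψ` strictly convex), the quantities
`αᵢ(a,v) = dᵢ(φᵢ(a), φᵢ(a+v))` satisfy `αᵢ(a,v) = αᵢ(a+v,v)`. -/
theorem stmt_15 {n : ℕ} (Φ : (Fin n → ℝ) → ℝ)
    (hpos : ∀ q : Fin n → ℝ, 0 ≤ q → 0 ≤ Φ q)
    (hdef : ∀ q : Fin n → ℝ, 0 ≤ q → (Φ q = 0 ↔ q = 0))
    (hmono : ∀ p q : Fin n → ℝ, 0 ≤ q → q ≤ p → Φ q ≤ Φ p)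
    (hsub : ∀ p q : Fin n → ℝ, 0 ≤ p → 0 ≤ q → Φ (p + q) ≤ Φ p + Φ q)
    (hhom : ∀ (l : ℝ) (q : Fin n → ℝ), 0 ≤ l → 0 ≤ q → Φ (l • q) = l * Φ q)
    (hstrict : ∀ x y : Fin n → ℝ, 0 ≤ x → 0 ≤ y → x ≠ 0 → y ≠ 0 →
      Φ (x + y) = Φ x + Φ y → ∃ c : ℝ, 0 < c ∧ y = c • x)
    (V : Type*) [NormedAddCommGroup V] [NormedSpace ℝ V]
    (A : Type*) [AddTorsor V A]
    (X : Fin n → Type*) [∀ i, MetricSpace (X i)]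
    (φ : A → ∀ i, X i)
    (hiso : ∀ a b : A, Φ (fun i => dist (φ a i) (φ b i)) = ‖b -ᵥ a‖) :
    ∀ (a : A) (v : V) (i : Fin n),
      dist (φ a i) (φ (v +ᵥ a) i) = dist (φ (v +ᵥ a) i) (φ (v +ᵥ (v +ᵥ a)) i) :=
  stmt_15_general Φ hmono hsub hhom hstrict V A X φ hiso
end

section
/- In the setting of the previous statement (isometric embedding φ of a normed affine space into a Φ-product with Ψ strictly convex), the quantities αᵢ(a,v) = dᵢ(φᵢ(a),φᵢ(a+v)) are independent of the base point a, positively homogeneous in v (αᵢ(a,tv) = |t|αᵢ(a,v)), and subadditive in v; consequently v ↦ αᵢ(v) is a pseudonorm on V and φᵢ : (V,αᵢ) → (Xᵢ,dᵢ) is isometric, with |v| = Φ(α₁(v),...,αₙ(v)) for all v. -/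
/-!
Write `α a v` for the vector `(dᵢ(φᵢ a, φᵢ (v +ᵥ a)))ᵢ`, so that `Φ (α a v) = ‖v‖`. For `0 < t < 1`
the triangle inequality gives `α a v ≤ α a (t • v) + α (t • v +ᵥ a) ((1 - t) • v)`, and applying `Φ`
turns this into an equality of norms, `‖v‖ = t ‖v‖ + (1 - t) ‖v‖`. Strict convexity then forces
the three vectors to be proportional, whence `α a (t • v) = t • α a v`; so `α a` is positively
homogeneous. Base-point independence follows by scaling: `α a (K • v)` and `α b (K • v)` differ by at
most a constant multiple of `‖b -ᵥ a‖` for every `K`, while both grow linearly in `K`.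
Homogeneity for negative `t` and subadditivity then come from the triangle inequality in `X i`.
-/

/-- Properties (1)–(4) of `Φ`, which only matter on the nonnegative orthant. -/
structure IsMonotoneOrthantNorm {ι : Type*} (Φ : (ι → ℝ) → ℝ) : Prop where
  eq_zero_iff : ∀ q : ι → ℝ, 0 ≤ q → (Φ q = 0 ↔ q = 0)
  mono : ∀ p q : ι → ℝ, 0 ≤ q → q ≤ p → Φ q ≤ Φ p
  add_le : ∀ p q : ι → ℝ, 0 ≤ p → 0 ≤ q → Φ (p + q) ≤ Φ p + Φ q
  smul : ∀ (l : ℝ) (q : ι → ℝ), 0 ≤ l → 0 ≤ q → Φ (l • q) = l * Φ q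

/-- The last field is the strict convexity of the unit ball of `Ψ x = Φ (|x₁|, …, |xₙ|)`, read on
the nonnegative orthant. -/
structure IsStrictlyConvexOrthantNorm {ι : Type*} (Φ : (ι → ℝ) → ℝ) : Prop
    extends IsMonotoneOrthantNorm Φ where
  exists_eq_smul_of_map_add_eq : ∀ x y : ι → ℝ, 0 ≤ x → 0 ≤ y → x ≠ 0 → y ≠ 0 →
    Φ (x + y) = Φ x + Φ y → ∃ c : ℝ, 0 < c ∧ y = c • x

theorem nonpos_of_forall_pos_mul_le {x C : ℝ} (h : ∀ K > 0, K * x ≤ C) : x ≤ 0 := by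
  by_contra! hx
  have := h ((|C| + 1) / x) (by positivity)
  rw [div_mul_cancel₀ _ hx.ne'] at this
  linarith [le_abs_self C]

namespace IsMonotoneOrthantNorm

variable {ι : Type*} {Φ : (ι → ℝ) → ℝ} {q : ι → ℝ}

theorem map_zero (hΦ : IsMonotoneOrthantNorm Φ) : Φ 0 = 0 :=
  (hΦ.eq_zero_iff 0 le_rfl).2 rfl

theorem nonneg (hΦ : IsMonotoneOrthantNorm Φ) (hq : 0 ≤ q) : 0 ≤ Φ q :=
  hΦ.map_zero ▸ hΦ.mono q 0 le_rfl hq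

theorem pos (hΦ : IsMonotoneOrthantNorm Φ) (hq : 0 ≤ q) (hq0 : q ≠ 0) : 0 < Φ q :=
  (hΦ.nonneg hq).lt_of_ne fun h => hq0 ((hΦ.eq_zero_iff q hq).1 h.symm)

theorem apply_mul_map_single_le [DecidableEq ι] (hΦ : IsMonotoneOrthantNorm Φ) (hq : 0 ≤ q)
    (i : ι) : q i * Φ (Pi.single i 1) ≤ Φ q := by
  have hsingle : (0 : ι → ℝ) ≤ Pi.single i 1 := Pi.single_nonneg.2 zero_le_one
  have hle : q i • (Pi.single i 1 : ι → ℝ) ≤ q := by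
    intro j
    rcases eq_or_ne j i with rfl | hj
    · simp
    · simpa [hj] using hq j
  calc q i * Φ (Pi.single i 1) = Φ (q i • Pi.single i 1) := (hΦ.smul _ _ (hq i) hsingle).symm
    _ ≤ Φ q := hΦ.mono _ _ (smul_nonneg (hq i) hsingle) hle

end IsMonotoneOrthantNorm

namespace IsStrictlyConvexOrthantNorm

variable {ι : Type*} {Φ : (ι → ℝ) → ℝ} {p q x y : ι → ℝ}

theorem eq_of_le_of_map_eq (hΦ : IsStrictlyConvexOrthantNorm Φ) (hq : 0 ≤ q) (hqp : q ≤ p)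
    (h : Φ q = Φ p) : q = p := by
  have hp : 0 ≤ p := hq.trans hqp
  by_cases hq0 : q = 0
  · subst hq0
    exact ((hΦ.eq_zero_iff p hp).1 (h ▸ hΦ.map_zero)).symm
  have hp0 : p ≠ 0 := by
    rintro rfl
    exact hq0 (le_antisymm hqp hq)
  -- `Φ q + Φ p = Φ (q + q) ≤ Φ (q + p)`, so the triangle inequality for `q, p` is an equality
  have hadd : Φ (q + p) = Φ q + Φ p := by
    refine le_antisymm (hΦ.add_le q p hq hp) ?_
    calc Φ q + Φ p = Φ ((2 : ℝ) • q) := by rw [hΦ.smul 2 q zero_le_two hq, ← h]; ring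
      _ ≤ Φ (q + p) := hΦ.mono _ _ (smul_nonneg zero_le_two hq) (by rw [two_smul]; gcongr)
  obtain ⟨c, hc, rfl⟩ := hΦ.exists_eq_smul_of_map_add_eq q p hq hp hq0 hp0 hadd
  have hc1 : c = 1 := by
    rw [hΦ.smul c q hc.le hq] at h
    nlinarith [hΦ.pos hq hq0]
  rw [hc1, one_smul]

theorem map_smul_eq_map_smul_of_le_add (hΦ : IsStrictlyConvexOrthantNorm Φ) (hx : 0 ≤ x)
    (hy : 0 ≤ y) (hq : 0 ≤ q) (hle : q ≤ x + y) (heq : Φ q = Φ x + Φ y) : Φ q • x = Φ x • q := by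
  by_cases hx0 : x = 0
  · simp [hx0, hΦ.map_zero]
  by_cases hy0 : y = 0
  · subst hy0
    rw [add_zero] at hle
    rw [hΦ.map_zero, add_zero] at heq
    rw [heq, hΦ.eq_of_le_of_map_eq hq hle heq]
  have hadd : Φ (x + y) = Φ x + Φ y :=
    le_antisymm (hΦ.add_le x y hx hy) (heq ▸ hΦ.mono _ _ hq hle)
  obtain rfl : q = x + y := hΦ.eq_of_le_of_map_eq hq hle (heq.trans hadd.symm)
  obtain ⟨c, hc, rfl⟩ := hΦ.exists_eq_smul_of_map_add_eq x y hx hy hx0 hy0 hadd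
  have hsum : x + c • x = (1 + c) • x := by rw [add_smul, one_smul]
  rw [hsum, hΦ.smul _ _ (by positivity) hx, smul_smul, mul_comm]

end IsStrictlyConvexOrthantNorm

section Displacement

variable {ι V A : Type*} {X : ι → Type*} [∀ i, PseudoMetricSpace (X i)]
  [AddCommGroup V] [AddTorsor V A]

/-- The vector `(αᵢ(a, v))ᵢ` of the paper. -/
def displacement (φ : A → ∀ i, X i) (a : A) (v : V) : ι → ℝ :=
  fun i => dist (φ a i) (φ (v +ᵥ a) i)

variable (φ : A → ∀ i, X i)

theorem displacement_nonneg (a : A) (v : V) : 0 ≤ displacement φ a v :=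
  fun _ => dist_nonneg

@[simp]
theorem displacement_zero (a : A) : displacement φ a (0 : V) = 0 := by
  ext i
  simp [displacement]

theorem displacement_add_le (a : A) (v w : V) :
    displacement φ a (v + w) ≤ displacement φ a v + displacement φ (v +ᵥ a) w := by
  intro i
  rw [displacement, add_comm, add_vadd]
  exact dist_triangle _ _ _

theorem displacement_neg (a : A) (v : V) :
    displacement φ a (-v) = displacement φ (-v +ᵥ a) v := by
  ext i
  rw [displacement, displacement, vadd_vadd, add_neg_cancel, zero_vadd, dist_comm]

end Displacement

def IsProductIsometry {ι V A : Type*} {X : ι → Type*} [∀ i, PseudoMetricSpace (X i)]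
    [SeminormedAddCommGroup V] [AddTorsor V A] (Φ : (ι → ℝ) → ℝ) (φ : A → ∀ i, X i) : Prop :=
  ∀ a b : A, Φ (fun i => dist (φ a i) (φ b i)) = ‖b -ᵥ a‖

namespace IsProductIsometry

variable {ι V A : Type*} {X : ι → Type*} [∀ i, PseudoMetricSpace (X i)]
  [SeminormedAddCommGroup V] [AddTorsor V A] {Φ : (ι → ℝ) → ℝ} {φ : A → ∀ i, X i}

theorem map_displacement (hφ : IsProductIsometry Φ φ) (a : A) (v : V) :
    Φ (displacement φ a v) = ‖v‖ := by
  have h := hφ a (v +ᵥ a)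
  rwa [vadd_vsub] at h

theorem dist_mul_map_single_le [DecidableEq ι] (hΦ : IsMonotoneOrthantNorm Φ)
    (hφ : IsProductIsometry Φ φ) (a b : A) (i : ι) :
    dist (φ a i) (φ b i) * Φ (Pi.single i 1) ≤ ‖b -ᵥ a‖ :=
  hφ a b ▸ hΦ.apply_mul_map_single_le (fun _ => dist_nonneg) i

variable [NormedSpace ℝ V]

theorem displacement_smul_of_lt_one (hΦ : IsStrictlyConvexOrthantNorm Φ)
    (hφ : IsProductIsometry Φ φ) (a : A) (v : V) {t : ℝ} (ht0 : 0 < t) (ht1 : t < 1) :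
    displacement φ a (t • v) = t • displacement φ a v := by
  set x := displacement φ a (t • v)
  set y := displacement φ (t • v +ᵥ a) ((1 - t) • v)
  have hle : displacement φ a v ≤ x + y := by
    simpa [← add_smul] using displacement_add_le φ a (t • v) ((1 - t) • v)
  have hΦx : Φ x = t * ‖v‖ := by
    rw [hφ.map_displacement, norm_smul, Real.norm_of_nonneg ht0.le]
  have hΦy : Φ y = (1 - t) * ‖v‖ := by
    rw [hφ.map_displacement, norm_smul, Real.norm_of_nonneg (by linarith)]
  have key := hΦ.map_smul_eq_map_smul_of_le_add (displacement_nonneg φ _ _)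
    (displacement_nonneg φ _ _) (displacement_nonneg φ _ _) hle
    (by rw [hφ.map_displacement, hΦx, hΦy]; ring)
  rw [hφ.map_displacement, hΦx, mul_comm, ← smul_smul] at key
  rcases (norm_nonneg v).eq_or_lt with hv | hv
  · have hq0 : displacement φ a v = 0 :=
      (hΦ.eq_zero_iff _ (displacement_nonneg φ _ _)).1 (by rw [hφ.map_displacement, ← hv])
    have hx0 : x = 0 :=
      (hΦ.eq_zero_iff _ (displacement_nonneg φ _ _)).1 (by rw [hΦx, ← hv, mul_zero])
    rw [hx0, hq0, smul_zero]
  · exact smul_right_injective _ hv.ne' key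

theorem displacement_smul_of_pos (hΦ : IsStrictlyConvexOrthantNorm Φ)
    (hφ : IsProductIsometry Φ φ) (a : A) (v : V) {t : ℝ} (ht : 0 < t) :
    displacement φ a (t • v) = t • displacement φ a v := by
  rcases lt_trichotomy t 1 with h | rfl | h
  · exact hφ.displacement_smul_of_lt_one hΦ a v ht h
  · simp
  · have := hφ.displacement_smul_of_lt_one hΦ a (t • v) (inv_pos.2 ht) (inv_lt_one_of_one_lt₀ h)
    rw [inv_smul_smul₀ ht.ne'] at this
    rw [this, smul_inv_smul₀ ht.ne']

theorem displacement_le (hΦ : IsStrictlyConvexOrthantNorm Φ) (hφ : IsProductIsometry Φ φ)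
    (a b : A) (v : V) (i : ι) : displacement φ a v i ≤ displacement φ b v i := by
  classical
  have hc : 0 < Φ (Pi.single i 1) :=
    hΦ.pos (Pi.single_nonneg.2 zero_le_one) (by simp)
  suffices h : ∀ K > 0, K * ((displacement φ a v i - displacement φ b v i) * Φ (Pi.single i 1))
      ≤ 2 * ‖b -ᵥ a‖ by
    have := nonpos_of_forall_pos_mul_le h
    nlinarith
  intro K hK
  have htri : displacement φ a (K • v) i ≤ dist (φ a i) (φ b i) + displacement φ b (K • v) i
      + dist (φ (K • v +ᵥ b) i) (φ (K • v +ᵥ a) i) :=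
    dist_triangle4 _ _ _ _
  have hab := hφ.dist_mul_map_single_le hΦ.toIsMonotoneOrthantNorm a b i
  have hab' := hφ.dist_mul_map_single_le hΦ.toIsMonotoneOrthantNorm (K • v +ᵥ b) (K • v +ᵥ a) i
  rw [vadd_vsub_vadd_cancel_left, ← neg_vsub_eq_vsub_rev, norm_neg] at hab'
  rw [hφ.displacement_smul_of_pos hΦ a v hK, hφ.displacement_smul_of_pos hΦ b v hK] at htri
  simp only [Pi.smul_apply, smul_eq_mul] at htri
  nlinarith [mul_le_mul_of_nonneg_right htri hc.le]

theorem displacement_eq (hΦ : IsStrictlyConvexOrthantNorm Φ) (hφ : IsProductIsometry Φ φ)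
    (a b : A) (v : V) : displacement φ a v = displacement φ b v :=
  funext fun i => (hφ.displacement_le hΦ a b v i).antisymm (hφ.displacement_le hΦ b a v i)

theorem displacement_smul (hΦ : IsStrictlyConvexOrthantNorm Φ) (hφ : IsProductIsometry Φ φ)
    (a : A) (t : ℝ) (v : V) : displacement φ a (t • v) = |t| • displacement φ a v := by
  rcases lt_trichotomy t 0 with h | rfl | h
  · rw [← neg_smul_neg, hφ.displacement_smul_of_pos hΦ a (-v) (neg_pos.2 h), abs_of_neg h,
      displacement_neg, hφ.displacement_eq hΦ _ a]
  · simp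
  · rw [hφ.displacement_smul_of_pos hΦ a v h, abs_of_pos h]

theorem displacement_add_le (hΦ : IsStrictlyConvexOrthantNorm Φ) (hφ : IsProductIsometry Φ φ)
    (a : A) (v w : V) : displacement φ a (v + w) ≤ displacement φ a v + displacement φ a w :=
  hφ.displacement_eq hΦ (v +ᵥ a) a w ▸ _root_.displacement_add_le φ a v w

end IsProductIsometry

theorem stmt_16_general {n : ℕ} (Φ : (Fin n → ℝ) → ℝ)
    (hdef : ∀ q : Fin n → ℝ, 0 ≤ q → (Φ q = 0 ↔ q = 0))
    (hmono : ∀ p q : Fin n → ℝ, 0 ≤ q → q ≤ p → Φ q ≤ Φ p)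
    (hsub : ∀ p q : Fin n → ℝ, 0 ≤ p → 0 ≤ q → Φ (p + q) ≤ Φ p + Φ q)
    (hhom : ∀ (l : ℝ) (q : Fin n → ℝ), 0 ≤ l → 0 ≤ q → Φ (l • q) = l * Φ q)
    (hstrict : ∀ x y : Fin n → ℝ, 0 ≤ x → 0 ≤ y → x ≠ 0 → y ≠ 0 →
      Φ (x + y) = Φ x + Φ y → ∃ c : ℝ, 0 < c ∧ y = c • x)
    (V : Type*) [NormedAddCommGroup V] [NormedSpace ℝ V]
    (A : Type*) [AddTorsor V A]
    (X : Fin n → Type*) [∀ i, MetricSpace (X i)]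
    (φ : A → ∀ i, X i)
    (hiso : ∀ a b : A, Φ (fun i => dist (φ a i) (φ b i)) = ‖b -ᵥ a‖) :
    (∀ (a b : A) (v : V) (i : Fin n),
      dist (φ a i) (φ (v +ᵥ a) i) = dist (φ b i) (φ (v +ᵥ b) i)) ∧
    (∀ (a : A) (t : ℝ) (v : V) (i : Fin n),
      dist (φ a i) (φ (t • v +ᵥ a) i) = |t| * dist (φ a i) (φ (v +ᵥ a) i)) ∧
    (∀ (a : A) (v w : V) (i : Fin n),
      dist (φ a i) (φ ((v + w) +ᵥ a) i) ≤
        dist (φ a i) (φ (v +ᵥ a) i) + dist (φ a i) (φ (w +ᵥ a) i)) ∧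
    (∀ (a b : A) (i : Fin n),
      dist (φ a i) (φ b i) = dist (φ a i) (φ ((b -ᵥ a) +ᵥ a) i)) ∧
    (∀ (a : A) (v : V), Φ (fun i => dist (φ a i) (φ (v +ᵥ a) i)) = ‖v‖) := by
  have hΦ : IsStrictlyConvexOrthantNorm Φ := ⟨⟨hdef, hmono, hsub, hhom⟩, hstrict⟩
  have hφ : IsProductIsometry Φ φ := hiso
  refine ⟨fun a b v i => congrFun (hφ.displacement_eq hΦ a b v) i,
    fun a t v i => congrFun (hφ.displacement_smul hΦ a t v) i,
    fun a v w i => hφ.displacement_add_le hΦ a v w i,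
    fun a b i => by rw [vsub_vadd], hφ.map_displacement⟩

/-- For an isometric embedding `φ` of a normed affine space into a
`Φ`-product (with `Ψ` strictly convex), the quantities
`αᵢ(a,v) = dᵢ(φᵢ(a), φᵢ(a+v))` are independent of the base point, positively
homogeneous and subadditive in `v` (hence pseudonorms), `φᵢ` is isometric from
`(V, αᵢ)` to `(Xᵢ, dᵢ)`, and `‖v‖ = Φ(α₁(v),...,αₙ(v))`. -/
theorem stmt_16 {n : ℕ} (Φ : (Fin n → ℝ) → ℝ)
    (hpos : ∀ q : Fin n → ℝ, 0 ≤ q → 0 ≤ Φ q)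
    (hdef : ∀ q : Fin n → ℝ, 0 ≤ q → (Φ q = 0 ↔ q = 0))
    (hmono : ∀ p q : Fin n → ℝ, 0 ≤ q → q ≤ p → Φ q ≤ Φ p)
    (hsub : ∀ p q : Fin n → ℝ, 0 ≤ p → 0 ≤ q → Φ (p + q) ≤ Φ p + Φ q)
    (hhom : ∀ (l : ℝ) (q : Fin n → ℝ), 0 ≤ l → 0 ≤ q → Φ (l • q) = l * Φ q)
    (hstrict : ∀ x y : Fin n → ℝ, 0 ≤ x → 0 ≤ y → x ≠ 0 → y ≠ 0 →
      Φ (x + y) = Φ x + Φ y → ∃ c : ℝ, 0 < c ∧ y = c • x)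
    (V : Type*) [NormedAddCommGroup V] [NormedSpace ℝ V]
    (A : Type*) [AddTorsor V A]
    (X : Fin n → Type*) [∀ i, MetricSpace (X i)]
    (φ : A → ∀ i, X i)
    (hiso : ∀ a b : A, Φ (fun i => dist (φ a i) (φ b i)) = ‖b -ᵥ a‖) :
    (∀ (a b : A) (v : V) (i : Fin n),
      dist (φ a i) (φ (v +ᵥ a) i) = dist (φ b i) (φ (v +ᵥ b) i)) ∧
    (∀ (a : A) (t : ℝ) (v : V) (i : Fin n),
      dist (φ a i) (φ (t • v +ᵥ a) i) = |t| * dist (φ a i) (φ (v +ᵥ a) i)) ∧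
    (∀ (a : A) (v w : V) (i : Fin n),
      dist (φ a i) (φ ((v + w) +ᵥ a) i) ≤
        dist (φ a i) (φ (v +ᵥ a) i) + dist (φ a i) (φ (w +ᵥ a) i)) ∧
    (∀ (a b : A) (i : Fin n),
      dist (φ a i) (φ b i) = dist (φ a i) (φ ((b -ᵥ a) +ᵥ a) i)) ∧
    (∀ (a : A) (v : V), Φ (fun i => dist (φ a i) (φ (v +ᵥ a) i)) = ‖v‖) :=
  stmt_16_general Φ hdef hmono hsub hhom hstrict V A X φ hiso
end

section
/- The Minkowski rank of the half-line ℝ₊ = [0,∞) with the standard metric is 0, while the product ℝ₊ × ℝ₊ with the metric d((x₁,x₂),(y₁,y₂)) = |x₁−y₁| + |x₂−y₂| contains an isometrically embedded copy of ℝ (namely t ↦ (−t,0) for t ≤ 0 and t ↦ (0,t) for t ≥ 0), so its Minkowski rank is at least 1. Hence Minkowski rank is not additive for Φ(x₁,x₂) = x₁ + x₂. -/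
/-!
A normed line `t ↦ f (t • e)` inside `ℝ≥0` is a rescaled isometric copy of `ℝ`; its points at
distance `r > f 0` from `f 0` in both directions must all lie at `f 0 + r`, which is absurd.
In the `ℓ¹`-product `ℝ≥0 × ℝ≥0`, however, the two boundary rays glue to an isometric copy of `ℝ`,
because `t⁺` and `t⁻` move in opposite directions.
-/

def minkowskiRankGE (X : Type*) (d : X → X → ℝ) (k : ℕ) : Prop :=
  ∃ N : (Fin k → ℝ) → ℝ,
    (∀ x : Fin k → ℝ, N x = 0 ↔ x = 0) ∧
    (∀ x y : Fin k → ℝ, N (x + y) ≤ N x + N y) ∧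
    (∀ (c : ℝ) (x : Fin k → ℝ), N (c • x) = |c| * N x) ∧
    ∃ f : (Fin k → ℝ) → X, ∀ v w : Fin k → ℝ, d (f v) (f w) = N (v - w)

noncomputable def minkowskiRank (X : Type*) (d : X → X → ℝ) : ℕ∞ :=
  sSup {k : ℕ∞ | ∃ m : ℕ, k = (m : ℕ∞) ∧ minkowskiRankGE X d m}

open scoped NNReal

theorem minkowskiRank_eq_zero {X : Type*} {d : X → X → ℝ}
    (h : ∀ m, minkowskiRankGE X d m → m = 0) : minkowskiRank X d = 0 := by
  refine sSup_eq_bot.mpr ?_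
  rintro k ⟨m, rfl, hm⟩
  simp [h m hm]

theorem le_minkowskiRank {X : Type*} {d : X → X → ℝ} {m : ℕ} (h : minkowskiRankGE X d m) :
    (m : ℕ∞) ≤ minkowskiRank X d :=
  le_sSup ⟨m, rfl, h⟩

theorem minkowskiRankGE_one_of_isometry {X : Type*} {d : X → X → ℝ} (g : ℝ → X)
    (hg : ∀ s t, d (g s) (g t) = |s - t|) : minkowskiRankGE X d 1 := by
  refine ⟨fun x => |x 0|, fun x => ?_, fun x y => abs_add_le (x 0) (y 0),
    fun c x => abs_mul c (x 0), fun v => g (v 0), fun v w => hg (v 0) (w 0)⟩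
  simp [funext_iff, Fin.forall_fin_one]

theorem Real.dist_toNNReal_neg_add_dist_toNNReal (s t : ℝ) :
    dist (Real.toNNReal (-s)) (Real.toNNReal (-t)) + dist (Real.toNNReal s) (Real.toNNReal t)
      = |s - t| := by
  simp only [NNReal.dist_eq, Real.coe_toNNReal']
  rcases le_total s 0 with hs | hs <;> rcases le_total t 0 with ht | ht <;>
    rcases le_total s t with hst | hst <;> grind

theorem NNReal.coe_eq_add_of_dist_eq {x c : ℝ≥0} {r : ℝ} (hcr : (c : ℝ) < r)
    (h : dist x c = r) : (x : ℝ) = c + r := by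
  rw [NNReal.dist_eq] at h
  rcases (_root_.abs_eq (c.coe_nonneg.trans hcr.le)).mp h with h | h
  · linarith
  · linarith [x.coe_nonneg]

theorem NNReal.eq_zero_of_dist_eq_mul_abs {g : ℝ → ℝ≥0} {a : ℝ}
    (hg : ∀ s t, dist (g s) (g t) = |s - t| * a) : a = 0 := by
  have ha_nonneg : 0 ≤ a := by simpa using (hg 1 0).symm.trans_ge dist_nonneg
  rcases eq_or_lt_of_le ha_nonneg with ha_zero | ha
  · exact ha_zero.symm
  set t := ((g 0 : ℝ) + 1) / a
  have hta : t * a = g 0 + 1 := div_mul_cancel₀ _ ha.ne'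
  have ht : 0 < t := by positivity
  have hfar : ∀ s, |s| = t → (g s : ℝ) = g 0 + (g 0 + 1) := fun s hs =>
    NNReal.coe_eq_add_of_dist_eq (by linarith) (by rw [hg, sub_zero, hs, hta])
  have hsame : dist (g t) (g (-t)) = 0 := by
    rw [NNReal.dist_eq, hfar t (abs_of_pos ht), hfar (-t) (by rw [abs_neg, abs_of_pos ht]),
      sub_self, abs_zero]
  rw [hg, sub_neg_eq_add, abs_of_pos (by positivity)] at hsame
  exact absurd hsame (by positivity)

theorem eq_zero_of_minkowskiRankGE_nnreal {m : ℕ}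
    (h : minkowskiRankGE ℝ≥0 (fun a b => dist a b) m) : m = 0 := by
  obtain ⟨N, hN0, -, hNsmul, f, hf⟩ := h
  by_contra hm
  set e : Fin m → ℝ := fun _ => 1
  have he : e ≠ 0 := fun h => one_ne_zero (congrFun h ⟨0, Nat.pos_of_ne_zero hm⟩)
  have hline : ∀ s t : ℝ, dist (f (s • e)) (f (t • e)) = |s - t| * N e := fun s t =>
    (hf _ _).trans (by rw [← sub_smul, hNsmul])
  exact he ((hN0 e).mp (NNReal.eq_zero_of_dist_eq_mul_abs hline))

/-- `rank_M(ℝ₊) = 0`, while the `ℓ¹`-product `ℝ₊ × ℝ₊` contains an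
isometric copy of `ℝ` (the concatenation of the two boundary rays), so its
Minkowski rank is at least `1`; hence the Minkowski rank is not additive for
`Φ(x₁,x₂) = x₁ + x₂`. -/
theorem stmt_18 :
    minkowskiRank NNReal (fun a b => dist a b) = 0 ∧
    (∀ s t : ℝ,
      dist (Real.toNNReal (-s)) (Real.toNNReal (-t)) +
        dist (Real.toNNReal s) (Real.toNNReal t) = |s - t|) ∧
    1 ≤ minkowskiRank (NNReal × NNReal) (fun p q => dist p.1 q.1 + dist p.2 q.2) ∧
    minkowskiRank (NNReal × NNReal) (fun p q => dist p.1 q.1 + dist p.2 q.2) ≠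
      minkowskiRank NNReal (fun a b => dist a b) +
        minkowskiRank NNReal (fun a b => dist a b) := by
  have hzero := minkowskiRank_eq_zero fun _ => eq_zero_of_minkowskiRankGE_nnreal
  have hone : 1 ≤ minkowskiRank (ℝ≥0 × ℝ≥0) (fun p q => dist p.1 q.1 + dist p.2 q.2) := by
    exact_mod_cast le_minkowskiRank <| minkowskiRankGE_one_of_isometry
      (fun t => (Real.toNNReal (-t), Real.toNNReal t)) Real.dist_toNNReal_neg_add_dist_toNNReal
  refine ⟨hzero, Real.dist_toNNReal_neg_add_dist_toNNReal, hone, fun h => ?_⟩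
  rw [h, hzero, add_zero] at hone
  exact absurd hone (by simp)
end
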